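/- arXiv:2312.02884 — 4 statements merged into one kernel-verified Lean document; each statement's English description precedes it below -/
import Mathlib

section
/- Let μ and ν be probability measures on {0,1,2,...} ∪ {∞} such that μ([0,i]) ≤ ν([0,i]) for every i ≥ 0, and let X_0, Y_0 ∈ 𝕊 satisfy X_0 ⪯ Y_0. Then there exists a probability space carrying processes (X_n)_{n≥0} and (Y_n)_{n≥0} such that (X_n) is an IBM(μ) started from X_0, (Y_n) is an IBM(ν) started from Y_0, and almost surely X_n ⪯ Y_n for every n ≥ 0. -/
open MeasureTheory ProbabilityTheory Filter

/-- Raw ball configurations: an assignment of a number of balls (possibly `∞`) to each bin. -/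
abbrev Cfg : Type := ℤ → ℕ∞

/-- `X` is a configuration: there is a front `f` such that `X k = 0` iff `k > f`. -/
def IsConfig (X : Cfg) : Prop := ∃ f : ℤ, ∀ k, X k = 0 ↔ f < k

/-- The front of a configuration: the largest index of a nonempty bin. -/
noncomputable def front (X : Cfg) : ℤ := sSup {k : ℤ | X k ≠ 0}

/-- `Σ_{j > k} X j`, computed as a supremum of finite partial sums in `ℕ∞`. -/
noncomputable def tailSum (X : Cfg) (k : ℤ) : ℕ∞ :=
  ⨆ s : Finset ℤ, ∑ j ∈ s, if k < j then X j else 0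

/-- `B(X,ξ) = inf { k : Σ_{j>k} X j < ξ }`, the bin containing the `ξ`-th ball from the right. -/
noncomputable def binOf (X : Cfg) (ξ : ℕ∞) : ℤ := sInf {k : ℤ | tailSum X k < ξ}

/-- The move `Φ_ξ` of the infinite bin model: for `1 ≤ ξ < ∞`, add one ball in the bin
to the right of the bin containing the `ξ`-th ball; `Φ_0` shifts the configuration one
step to the right; `Φ_∞` does nothing. -/
noncomputable def ibmStep (ξ : ℕ∞) (X : Cfg) : Cfg :=
  if ξ = 0 then fun k => X (k - 1)
  else if ξ = ⊤ then X
  else fun k => X k + if k = binOf X ξ + 1 then 1 else 0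

/-- The partial order on configurations: `X ⪯ Y` iff for every `ξ ≥ 1` the `ξ`-th ball
of `X` lies in a bin no further right than the `ξ`-th ball of `Y`. -/
def cfgLE (X Y : Cfg) : Prop := ∀ ξ : ℕ, 1 ≤ ξ → binOf X ξ ≤ binOf Y ξ

/-- `(X_n)` is an IBM(μ) on `(Ω, P)` started from `X₀`: it is driven by an i.i.d.
sequence of selection numbers with common law `μ`. -/
def IsIBM (μ : Measure ℕ∞) {Ω : Type} [MeasurableSpace Ω] (P : Measure Ω)
    (X₀ : Cfg) (X : ℕ → Ω → Cfg) : Prop :=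
  ∃ ξ : ℕ → Ω → ℕ∞,
    ProbabilityTheory.iIndepFun ξ P ∧
    (∀ n, P.map (ξ n) = μ) ∧ (∀ ω, X 0 ω = X₀) ∧
    (∀ n ω, X (n + 1) ω = ibmStep (ξ (n + 1) ω) (X n ω))


open scoped ENNReal NNReal
open Set

namespace IBMAux


lemma sum_le_tailSum (X : Cfg) (k : ℤ) (s : Finset ℤ) :
    (∑ j ∈ s, if k < j then X j else 0) ≤ tailSum X k :=
  le_iSup (fun s : Finset ℤ => ∑ j ∈ s, if k < j then X j else 0) s

lemma tailSum_anti (X : Cfg) {k k' : ℤ} (h : k ≤ k') : tailSum X k' ≤ tailSum X k := by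
  refine iSup_le fun s => le_trans ?_ (sum_le_tailSum X k s)
  refine Finset.sum_le_sum fun j _ => ?_
  split_ifs with h1 h2
  · exact le_rfl
  · omega
  · exact zero_le
  · exact le_rfl

lemma tailSum_eq_zero {X : Cfg} {f : ℤ} (hf : ∀ k, X k = 0 ↔ f < k) {k : ℤ} (h : f ≤ k) :
    tailSum X k = 0 := by
  refine le_antisymm (iSup_le fun s => le_of_eq (Finset.sum_eq_zero fun j hj => ?_)) zero_le
  split_ifs with h1
  · exact (hf j).2 (lt_of_le_of_lt h h1)
  · rfl

lemma le_tailSum {X : Cfg} {f : ℤ} (hf : ∀ k, X k = 0 ↔ f < k) (k : ℤ) (n : ℕ)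
    (h : k + n ≤ f) : (n : ℕ∞) ≤ tailSum X k := by
  refine le_trans ?_ (sum_le_tailSum X k (Finset.Icc (k+1) (k+n)))
  have hcard : (Finset.Icc (k+1) (k+(n:ℤ))).card = n := by
    rw [Int.card_Icc]; omega
  calc (n : ℕ∞) = ∑ _j ∈ Finset.Icc (k+1) (k+(n:ℤ)), (1:ℕ∞) := by
        rw [Finset.sum_const, hcard]; simp
    _ ≤ _ := by
        refine Finset.sum_le_sum fun j hj => ?_
        rw [Finset.mem_Icc] at hj
        rw [if_pos (by omega)]
        refine ENat.one_le_iff_ne_zero.2 fun h0 => ?_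
        have := (hf j).1 h0; omega

lemma binOf_nonempty {X : Cfg} {f : ℤ} (hf : ∀ k, X k = 0 ↔ f < k) {ξ : ℕ∞} (hξ0 : ξ ≠ 0) :
    {k : ℤ | tailSum X k < ξ}.Nonempty :=
  ⟨f, by simp only [mem_setOf_eq, tailSum_eq_zero hf le_rfl]; exact pos_iff_ne_zero.2 hξ0⟩

lemma binOf_bddBelow {X : Cfg} {f : ℤ} (hf : ∀ k, X k = 0 ↔ f < k) {ξ : ℕ∞} (hξtop : ξ ≠ ⊤) :
    BddBelow {k : ℤ | tailSum X k < ξ} := by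
  lift ξ to ℕ using hξtop
  refine ⟨f - ξ, fun k hk => ?_⟩
  simp only [mem_setOf_eq] at hk
  by_contra hc
  exact absurd (lt_of_le_of_lt (le_tailSum hf k ξ (by omega)) hk) (lt_irrefl _)

lemma tailSum_binOf_lt {X : Cfg} {f : ℤ} (hf : ∀ k, X k = 0 ↔ f < k) {ξ : ℕ∞}
    (hξ0 : ξ ≠ 0) (hξtop : ξ ≠ ⊤) : tailSum X (binOf X ξ) < ξ :=
  Int.csInf_mem (binOf_nonempty hf hξ0) (binOf_bddBelow hf hξtop)

lemma binOf_le {X : Cfg} {f : ℤ} (hf : ∀ k, X k = 0 ↔ f < k) {ξ : ℕ∞} (hξtop : ξ ≠ ⊤)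
    {k : ℤ} (h : tailSum X k < ξ) : binOf X ξ ≤ k :=
  csInf_le (binOf_bddBelow hf hξtop) h

lemma binOf_le_front {X : Cfg} {f : ℤ} (hf : ∀ k, X k = 0 ↔ f < k) {ξ : ℕ∞}
    (hξ0 : ξ ≠ 0) (hξtop : ξ ≠ ⊤) : binOf X ξ ≤ f :=
  binOf_le hf hξtop (by rw [tailSum_eq_zero hf le_rfl]; exact pos_iff_ne_zero.2 hξ0)

lemma binOf_anti {X : Cfg} {f : ℤ} (hf : ∀ k, X k = 0 ↔ f < k) {a b : ℕ∞}
    (ha0 : a ≠ 0) (hbtop : b ≠ ⊤) (hab : a ≤ b) : binOf X b ≤ binOf X a :=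
  csInf_le_csInf (binOf_bddBelow hf hbtop) (binOf_nonempty hf ha0)
    (fun k hk => lt_of_lt_of_le hk hab)

lemma tailSum_sub_one (X : Cfg) (k : ℤ) : tailSum X (k - 1) = X k + tailSum X k := by
  refine le_antisymm (iSup_le fun s => ?_) ?_
  · have heq : ∑ j ∈ s, (if k - 1 < j then X j else 0)
        = ∑ j ∈ s, ((if j = k then X k else 0) + (if k < j then X j else 0)) := by
      refine Finset.sum_congr rfl fun j _ => ?_
      rcases eq_or_ne j k with rfl | hj
      · rw [if_pos (by omega), if_pos rfl, if_neg (by omega), add_zero]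
      · rw [if_neg hj, zero_add]
        simp only [show (k - 1 < j) ↔ (k < j) from by omega]
    rw [heq, Finset.sum_add_distrib]
    refine add_le_add ?_ (sum_le_tailSum X k s)
    rw [Finset.sum_ite_eq' s k (fun _ => X k)]
    split_ifs <;> simp
  · rw [tailSum, ENat.add_iSup]
    refine iSup_le fun s => ?_
    have h1 : (if k < k then X k else 0) = 0 := by rw [if_neg (by omega)]
    rw [← Finset.sum_erase s h1]
    refine le_trans (le_of_eq ?_) (sum_le_tailSum X (k-1) (insert k (s.erase k)))
    rw [Finset.sum_insert (Finset.notMem_erase _ _)]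
    rw [if_pos (by omega : k - 1 < k)]
    congr 1
    refine Finset.sum_congr rfl fun j hj => ?_
    have hj' : j ≠ k := Finset.ne_of_mem_erase hj
    simp only [show (k < j) ↔ (k - 1 < j) from by omega]

lemma tailSum_shift (X : Cfg) (k : ℤ) :
    tailSum (fun j => X (j - 1)) k = tailSum X (k - 1) := by
  refine le_antisymm (iSup_le fun s => ?_) (iSup_le fun s => ?_)
  · refine le_trans (le_of_eq ?_) (sum_le_tailSum X (k-1) (s.image (· - 1)))
    rw [Finset.sum_image (by intro a _ b _ h; exact sub_left_injective h)]
    refine Finset.sum_congr rfl fun j _ => ?_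
    simp only [show (k < j) ↔ (k - 1 < j - 1) from by omega]
  · refine le_trans (le_of_eq ?_) (sum_le_tailSum (fun j => X (j-1)) k (s.image (· + 1)))
    rw [Finset.sum_image (by intro a _ b _ h; exact add_left_injective 1 h)]
    refine Finset.sum_congr rfl fun j _ => ?_
    simp only [add_sub_cancel_right, show (k - 1 < j) ↔ (k < j + 1) from by omega]

lemma tailSum_addBall (X : Cfg) (m k : ℤ) :
    tailSum (fun j => X j + if j = m then 1 else 0) k
      = tailSum X k + if k < m then 1 else 0 := by
  have hsplit : ∀ s : Finset ℤ, ∑ j ∈ s, (if k < j then X j + (if j = m then 1 else 0) else 0)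
      = ∑ j ∈ s, (if k < j then X j else 0)
        + ∑ j ∈ s, (if j = m then (if k < m then (1:ℕ∞) else 0) else 0) := by
    intro s
    rw [← Finset.sum_add_distrib]
    refine Finset.sum_congr rfl fun j _ => ?_
    rcases eq_or_ne j m with rfl | hj
    · split_ifs <;> simp_all
    · rw [if_neg hj, add_zero]
      split_ifs <;> simp
  refine le_antisymm (iSup_le fun s => ?_) ?_
  · rw [hsplit, Finset.sum_ite_eq' s m]
    refine add_le_add (sum_le_tailSum X k s) ?_
    split_ifs <;> simp
  · rcases lt_or_ge k m with hkm | hkm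
    · rw [if_pos hkm, tailSum, ENat.iSup_add]
      refine iSup_le fun s => ?_
      have h2 : (∑ j ∈ s, if k < j then X j else 0) + 1
          ≤ ∑ j ∈ insert m s, (if k < j then X j + (if j = m then 1 else 0) else 0) := by
        rw [hsplit (insert m s), Finset.sum_ite_eq' (insert m s) m,
          if_pos (Finset.mem_insert_self m s), if_pos hkm]
        exact add_le_add (Finset.sum_le_sum_of_subset (Finset.subset_insert m s)) le_rfl
      exact le_trans h2 (sum_le_tailSum _ k (insert m s))
    · rw [if_neg (not_lt.2 hkm), add_zero]
      refine iSup_le fun s => le_trans ?_ (sum_le_tailSum _ k s)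
      exact Finset.sum_le_sum fun j _ => by split_ifs <;> simp



lemma ibmStep_zero (X : Cfg) : ibmStep 0 X = fun k => X (k - 1) := if_pos rfl
lemma ibmStep_top (X : Cfg) : ibmStep ⊤ X = X := by
  rw [ibmStep, if_neg (by simp), if_pos rfl]
lemma ibmStep_else {ξ : ℕ∞} (h0 : ξ ≠ 0) (ht : ξ ≠ ⊤) (X : Cfg) :
    ibmStep ξ X = fun k => X k + if k = binOf X ξ + 1 then 1 else 0 := by
  rw [ibmStep, if_neg h0, if_neg ht]
/-- tail-sum domination -/
def TLE (X Y : Cfg) : Prop := ∀ k, tailSum X k ≤ tailSum Y k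

lemma cfgLE_of_TLE {X Y : Cfg} {f g : ℤ} (hf : ∀ k, X k = 0 ↔ f < k)
    (hg : ∀ k, Y k = 0 ↔ g < k) (h : TLE X Y) : cfgLE X Y := by
  intro ξ hξ
  have hξ0 : (ξ : ℕ∞) ≠ 0 := by exact_mod_cast (Nat.one_le_iff_ne_zero.mp hξ)
  have hξtop : (ξ : ℕ∞) ≠ ⊤ := by simp
  exact binOf_le hf hξtop (lt_of_le_of_lt (h _) (tailSum_binOf_lt hg hξ0 hξtop))

lemma TLE_of_cfgLE {X Y : Cfg} {f g : ℤ} (hf : ∀ k, X k = 0 ↔ f < k)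
    (hg : ∀ k, Y k = 0 ↔ g < k) (h : cfgLE X Y) : TLE X Y := by
  intro k
  by_contra hc
  push_neg at hc
  have htop : tailSum Y k ≠ ⊤ := (lt_of_lt_of_le hc le_top).ne
  lift tailSum Y k to ℕ using htop with n hn
  have h1 : binOf Y (n+1 : ℕ) ≤ k := by
    refine binOf_le hg (ENat.coe_ne_top _) ?_
    rw [← hn]; exact_mod_cast Nat.lt_succ_self n
  have h2 : binOf X (n+1 : ℕ) ≤ k := le_trans (h (n+1) (Nat.le_add_left 1 n)) h1
  have h3 : tailSum X k ≤ tailSum X (binOf X (n+1 : ℕ)) := tailSum_anti X h2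
  have h4 : tailSum X (binOf X (n+1 : ℕ)) < ((n+1 : ℕ) : ℕ∞) :=
    tailSum_binOf_lt hf (by exact_mod_cast Nat.succ_ne_zero n) (ENat.coe_ne_top _)
  have h5 : tailSum X k < ((n+1:ℕ) : ℕ∞) := lt_of_le_of_lt h3 h4
  have h6 : tailSum X k ≤ (n : ℕ∞) := by
    have := (lt_of_lt_of_le h5 le_top).ne
    lift tailSum X k to ℕ using this with m hm
    exact_mod_cast Nat.lt_succ_iff.mp (by exact_mod_cast h5)
  exact absurd (lt_of_lt_of_le hc h6) (lt_irrefl _)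

lemma isConfig_ibmStep {X : Cfg} {f : ℤ} (hf : ∀ k, X k = 0 ↔ f < k) (ξ : ℕ∞) :
    ∃ f', ∀ k, ibmStep ξ X k = 0 ↔ f' < k := by
  rcases eq_or_ne ξ 0 with rfl | hξ0
  · exact ⟨f + 1, fun k => by rw [ibmStep_zero]; rw [hf]; constructor <;> intro <;> omega⟩
  rcases eq_or_ne ξ ⊤ with rfl | hξtop
  · exact ⟨f, fun k => by rw [ibmStep_top]; exact hf k⟩
  refine ⟨max f (binOf X ξ + 1), fun k => ?_⟩
  rw [ibmStep_else hξ0 hξtop]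
  simp only []
  have hm : binOf X ξ + 1 ≤ f + 1 := by
    have := binOf_le_front hf hξ0 hξtop; omega
  simp only [add_eq_zero, hf, max_lt_iff]
  constructor
  · rintro ⟨h1, h2⟩
    refine ⟨h1, ?_⟩
    rcases eq_or_ne k (binOf X ξ + 1) with rfl | hk
    · rw [if_pos rfl] at h2; exact absurd h2 one_ne_zero
    · omega
  · rintro ⟨h1, h2⟩
    exact ⟨h1, by rw [if_neg (by omega)]⟩

lemma TLE_ibmStep {X Y : Cfg} {f g : ℤ} (hf : ∀ k, X k = 0 ↔ f < k)
    (hg : ∀ k, Y k = 0 ↔ g < k) (h : TLE X Y) {a b : ℕ∞} (hab : a ≤ b) :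
    TLE (ibmStep b X) (ibmStep a Y) := by
  rcases eq_or_ne b 0 with rfl | hb0
  · have ha : a = 0 := le_antisymm hab zero_le
    subst ha
    intro k
    rw [ibmStep_zero, ibmStep_zero, tailSum_shift, tailSum_shift]
    exact h (k - 1)
  rcases eq_or_ne b ⊤ with rfl | hbtop
  · rw [ibmStep_top]
    rcases eq_or_ne a 0 with rfl | ha0
    · intro k
      rw [ibmStep_zero, tailSum_shift]
      exact le_trans (h k) (tailSum_anti Y (by omega))
    rcases eq_or_ne a ⊤ with rfl | hatop
    · rw [ibmStep_top]; exact h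
    · intro k
      rw [ibmStep_else ha0 hatop, tailSum_addBall]
      exact le_trans (h k) le_self_add
  -- b finite nonzero
  rw [ibmStep_else hb0 hbtop]
  rcases eq_or_ne a 0 with rfl | ha0
  · intro k
    rw [ibmStep_zero, tailSum_addBall, tailSum_shift, tailSum_sub_one]
    split_ifs with hkm
    · have hk : k ≤ binOf X b := by omega
      have hXk : 1 ≤ X k := by
        refine ENat.one_le_iff_ne_zero.2 fun h0 => ?_
        have h1 := (hf k).1 h0
        have h2 : binOf X b ≤ f := binOf_le_front hf hb0 hbtop
        omega
      calc tailSum X k + 1 ≤ tailSum X k + X k := add_le_add le_rfl hXk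
        _ = X k + tailSum X k := add_comm _ _
        _ = tailSum X (k - 1) := (tailSum_sub_one X k).symm
        _ ≤ Y k + tailSum Y k := by rw [← tailSum_sub_one]; exact h (k - 1)
    · rw [add_zero]
      calc tailSum X k ≤ tailSum Y k := h k
        _ ≤ Y k + tailSum Y k := le_add_self
  have hatop : a ≠ ⊤ := fun hc => hbtop (top_le_iff.mp (hc ▸ hab))
  rw [ibmStep_else ha0 hatop]
  have hmm : binOf X b ≤ binOf Y a := by
    refine le_trans (binOf_anti hf ha0 hbtop hab) ?_
    exact binOf_le hf hatop (lt_of_le_of_lt (h _) (tailSum_binOf_lt hg ha0 hatop))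
  intro k
  rw [tailSum_addBall, tailSum_addBall]
  refine add_le_add (h k) ?_
  split_ifs with h1 h2
  · exact le_rfl
  · omega
  · exact zero_le
  · exact le_rfl



section Unique
variable {H : Type*} [AddCommGroup H] [TopologicalSpace H] [IsTopologicalAddGroup H]
  [CompactSpace H] [T2Space H] [SecondCountableTopology H] [Nonempty H]
  [MeasurableSpace H] [BorelSpace H]

lemma inv_prob_eq (μ₁ μ₂ : Measure H) [IsProbabilityMeasure μ₁] [IsProbabilityMeasure μ₂]
    [μ₁.IsAddLeftInvariant] [μ₂.IsAddLeftInvariant] : μ₁ = μ₂ := by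
  have h1 := Measure.isAddInvariant_eq_smul_of_compactSpace μ₁ (Measure.addHaar (G := H))
  have h2 := Measure.isAddInvariant_eq_smul_of_compactSpace μ₂ (Measure.addHaar (G := H))
  set c₁ := Measure.addHaarScalarFactor μ₁ (Measure.addHaar (G := H)) with hc₁
  set c₂ := Measure.addHaarScalarFactor μ₂ (Measure.addHaar (G := H)) with hc₂
  have hU0 : (Measure.addHaar (G := H)) univ ≠ 0 :=
    (isOpen_univ.measure_pos _ univ_nonempty).ne'
  have hUtop : (Measure.addHaar (G := H)) univ ≠ ⊤ :=
    (IsCompact.measure_lt_top isCompact_univ).ne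
  have e1 : (1 : ℝ≥0∞) = (c₁ : ℝ≥0∞) * (Measure.addHaar (G := H)) univ := by
    have := congrArg (fun m : Measure H => m univ) h1
    simpa [Measure.smul_apply, smul_eq_mul] using this
  have e2 : (1 : ℝ≥0∞) = (c₂ : ℝ≥0∞) * (Measure.addHaar (G := H)) univ := by
    have := congrArg (fun m : Measure H => m univ) h2
    simpa [Measure.smul_apply, smul_eq_mul] using this
  have : (c₁ : ℝ≥0∞) = (c₂ : ℝ≥0∞) := by
    have k1 : (c₁ : ℝ≥0∞) = ((c₁ : ℝ≥0∞) * (Measure.addHaar (G := H)) univ)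
        * ((Measure.addHaar (G := H)) univ)⁻¹ := by
      rw [mul_assoc, ENNReal.mul_inv_cancel hU0 hUtop, mul_one]
    have k2 : (c₂ : ℝ≥0∞) = ((c₂ : ℝ≥0∞) * (Measure.addHaar (G := H)) univ)
        * ((Measure.addHaar (G := H)) univ)⁻¹ := by
      rw [mul_assoc, ENNReal.mul_inv_cancel hU0 hUtop, mul_one]
    rw [k1, k2, ← e1, ← e2]
  rw [h1, h2]
  congr 1
  exact_mod_cast this

end Unique

section Group
instance factzo : Fact ((0:ℝ) < 1) := ⟨one_pos⟩

abbrev Circ : Type := AddCircle (1:ℝ)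
abbrev GG : Type := ℕ → Circ

instance : IsProbabilityMeasure (volume : Measure Circ) :=
  ⟨by rw [AddCircle.measure_univ]; simp⟩

noncomputable def PP : Measure GG :=
  ((Measure.addHaar (G := GG)) univ)⁻¹ • (Measure.addHaar (G := GG))

lemma addHaar_univ_ne_zero : (Measure.addHaar (G := GG)) univ ≠ 0 :=
  (isOpen_univ.measure_pos _ univ_nonempty).ne'
lemma addHaar_univ_ne_top : (Measure.addHaar (G := GG)) univ ≠ ⊤ :=
  (IsCompact.measure_lt_top isCompact_univ).ne

instance : IsProbabilityMeasure PP :=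
  ⟨by rw [PP, Measure.smul_apply, smul_eq_mul,
      ENNReal.inv_mul_cancel addHaar_univ_ne_zero addHaar_univ_ne_top]⟩

instance : PP.IsAddLeftInvariant := by
  rw [PP]; infer_instance

/-- pushforward of an invariant measure under a "translative" map is invariant -/
lemma map_invariant {H K : Type*} [AddGroup H] [AddGroup K] [MeasurableSpace H]
    [MeasurableSpace K] [MeasurableAdd H] [MeasurableAdd K]
    (P : Measure H) [P.IsAddLeftInvariant] (f : H → K) (hf : Measurable f)
    (hsur : ∀ y : K, ∃ x : H, ∀ g : H, f (x + g) = y + f g) :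
    (P.map f).IsAddLeftInvariant := by
  constructor
  intro y
  obtain ⟨x, hx⟩ := hsur y
  rw [Measure.map_map (measurable_const_add y) hf]
  have : (fun g => y + f g) = f ∘ (fun g => x + g) := by
    funext g; exact (hx g).symm
  rw [show ((y + ·) ∘ f) = f ∘ (fun g => x + g) from this]
  rw [← Measure.map_map hf (measurable_const_add x),
    MeasureTheory.map_add_left_eq_self P x]

end Group

section Law
noncomputable def volC : Measure Circ := volume

instance : IsProbabilityMeasure volC := by rw [volC]; infer_instance
instance : volC.IsAddLeftInvariant := by rw [volC]; infer_instance

lemma coord_law (n : ℕ) : PP.map (fun g : GG => g n) = volC := by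
  have hmeas : Measurable (fun g : GG => g n) := measurable_pi_apply n
  haveI : (PP.map (fun g : GG => g n)).IsAddLeftInvariant := by
    refine map_invariant PP _ hmeas (fun y => ⟨Function.update 0 n y, fun g => ?_⟩)
    simp [Function.update_self]
  haveI : IsProbabilityMeasure (PP.map (fun g : GG => g n)) :=
    Measure.isProbabilityMeasure_map hmeas.aemeasurable
  exact inv_prob_eq _ _

lemma marginal_law (S : Finset ℕ) :
    PP.map (fun (g : GG) (i : S) => g i) = Measure.pi (fun _ : S => volC) := by
  have hmeas : Measurable (fun (g : GG) (i : S) => g i) :=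
    measurable_pi_lambda _ fun i => measurable_pi_apply (i : ℕ)
  haveI : (PP.map (fun (g : GG) (i : S) => g i)).IsAddLeftInvariant := by
    refine map_invariant PP _ hmeas (fun y =>
      ⟨fun m => if h : m ∈ S then y ⟨m, h⟩ else 0, fun g => ?_⟩)
    funext i
    simp [Pi.add_apply, dif_pos i.2]
  haveI : IsProbabilityMeasure (PP.map (fun (g : GG) (i : S) => g i)) :=
    Measure.isProbabilityMeasure_map hmeas.aemeasurable
  haveI : (Measure.pi fun _ : S => volC).IsAddLeftInvariant := Measure.pi.isAddLeftInvariant _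
  exact inv_prob_eq _ _

lemma coords_indep :
    iIndepFun (fun (n : ℕ) (g : GG) => g n) PP := by
  rw [iIndepFun_iff_measure_inter_preimage_eq_mul]
  intro S sets hsets
  have hmeas : Measurable (fun (g : GG) (i : S) => g i) :=
    measurable_pi_lambda _ fun i => measurable_pi_apply (i : ℕ)
  have key : (⋂ i ∈ S, (fun g : GG => g i) ⁻¹' sets i)
      = (fun (g : GG) (i : S) => g i) ⁻¹' (univ.pi fun i : S => sets i) := by
    ext g
    simp only [Set.mem_iInter, Set.mem_preimage, Set.mem_pi, Set.mem_univ, forall_true_left,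
      Subtype.forall]
  rw [key, ← Measure.map_apply hmeas (MeasurableSet.univ_pi fun i => hsets i i.2),
    marginal_law, Measure.pi_pi]
  rw [← Finset.prod_coe_sort S (fun i => PP ((fun g : GG => g i) ⁻¹' sets i))]
  refine Finset.prod_congr rfl fun i _ => ?_
  rw [← Measure.map_apply (measurable_pi_apply (i:ℕ)) (hsets i i.2), coord_law]

end Law

section Quantile
open scoped ENNReal

noncomputable def quant (μ : Measure ℕ∞) (u : ℝ) : ℕ∞ :=
  sInf {x : ℕ∞ | ENNReal.ofReal u ≤ μ (Iic x)}

lemma quant_le_coe_iff {μ : Measure ℕ∞} {u : ℝ} {n : ℕ} :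
    quant μ u ≤ (n : ℕ∞) ↔ ENNReal.ofReal u ≤ μ (Iic (n : ℕ∞)) := by
  constructor
  · intro h
    have hne : {x : ℕ∞ | ENNReal.ofReal u ≤ μ (Iic x)}.Nonempty := by
      by_contra hc
      rw [not_nonempty_iff_eq_empty] at hc
      rw [quant, hc, sInf_empty] at h
      exact absurd (top_le_iff.mp h) (ENat.coe_ne_top n)
    have hmem := csInf_mem hne
    exact le_trans hmem (measure_mono (Iic_subset_Iic.mpr h))
  · intro h
    exact sInf_le h

lemma quant_mono_meas {μ ν : Measure ℕ∞} (hd : ∀ x : ℕ∞, μ (Iic x) ≤ ν (Iic x)) (u : ℝ) :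
    quant ν u ≤ quant μ u :=
  sInf_le_sInf (fun x hx => le_trans hx (hd x))

lemma quant_preimage_Iic (μ : Measure ℕ∞) [IsFiniteMeasure μ] (n : ℕ) :
    quant μ ⁻¹' (Iic (n:ℕ∞)) = Iic ((μ (Iic (n:ℕ∞))).toReal) := by
  ext u
  simp only [Set.mem_preimage, Set.mem_Iic, quant_le_coe_iff]
  exact ENNReal.ofReal_le_iff_le_toReal (measure_ne_top μ _)

lemma measurable_quant (μ : Measure ℕ∞) [IsFiniteMeasure μ] : Measurable (quant μ) := by
  have hIic : ∀ n : ℕ, MeasurableSet (quant μ ⁻¹' (Iic (n:ℕ∞))) := fun n => by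
    rw [quant_preimage_Iic]; exact measurableSet_Iic
  refine measurable_to_countable' (fun x => ?_)
  induction x using ENat.recTopCoe with
  | top =>
    have : quant μ ⁻¹' {⊤} = (⋃ n : ℕ, quant μ ⁻¹' (Iic (n:ℕ∞)))ᶜ := by
      ext u
      simp only [Set.mem_preimage, Set.mem_singleton_iff, Set.mem_compl_iff, Set.mem_iUnion,
        Set.mem_Iic, not_exists, not_le]
      constructor
      · intro h n; rw [h]; exact lt_of_le_of_ne le_top (ENat.coe_ne_top n)
      · intro h
        by_contra hc
        lift quant μ u to ℕ using hc with m hm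
        exact lt_irrefl _ (h m)
    rw [this]
    exact (MeasurableSet.iUnion (fun n => hIic n)).compl
  | coe n =>
    induction n with
    | zero =>
      have : quant μ ⁻¹' {((0:ℕ):ℕ∞)} = quant μ ⁻¹' (Iic ((0:ℕ):ℕ∞)) := by
        ext u; simp [nonpos_iff_eq_zero]
      rw [this]; exact hIic 0
    | succ m _ =>
      have : quant μ ⁻¹' {((m+1:ℕ):ℕ∞)}
          = quant μ ⁻¹' (Iic ((m+1:ℕ):ℕ∞)) \ quant μ ⁻¹' (Iic ((m:ℕ):ℕ∞)) := by
        ext u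
        simp only [Set.mem_preimage, Set.mem_singleton_iff, Set.mem_diff, Set.mem_Iic, not_le]
        constructor
        · intro h
          rw [h]
          refine ⟨le_rfl, ?_⟩
          exact_mod_cast Nat.lt_succ_self m
        · rintro ⟨h1, h2⟩
          refine le_antisymm h1 ?_
          rw [show ((m+1:ℕ):ℕ∞) = (m:ℕ∞) + 1 by push_cast; rfl]
          exact ENat.add_one_le_iff (ENat.coe_ne_top m) |>.mpr h2
      rw [this]; exact (hIic (m+1)).diff (hIic m)

end Quantile


noncomputable def qm (μ : Measure ℕ∞) : Circ → ℕ∞ := AddCircle.liftIoc 1 0 (quant μ)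

lemma measurable_qm (μ : Measure ℕ∞) [IsFiniteMeasure μ] : Measurable (qm μ) := by
  have h : qm μ = (fun x : Ioc (0:ℝ) (0+1) => quant μ (x:ℝ))
      ∘ (AddCircle.measurableEquivIoc (T := 1) 0) := rfl
  rw [h]
  exact ((measurable_quant μ).comp measurable_subtype_coe).comp
    (AddCircle.measurableEquivIoc (T := 1) 0).measurable

lemma measSet_enat (s : Set ℕ∞) : MeasurableSet s := by measurability

lemma enat_ext_of_Iic (μ ν : Measure ℕ∞) [IsProbabilityMeasure μ] [IsProbabilityMeasure ν]
    (h : ∀ n : ℕ, μ (Iic (n:ℕ∞)) = ν (Iic (n:ℕ∞))) : μ = ν := by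
  have hU : ∀ ρ : Measure ℕ∞, ρ (⋃ n : ℕ, Iic ((n:ℕ):ℕ∞)) = ⨆ n : ℕ, ρ (Iic ((n:ℕ):ℕ∞)) := by
    intro ρ
    refine Directed.measure_iUnion (fun i j => ⟨max i j, ?_, ?_⟩)
    · exact Iic_subset_Iic.mpr (by exact_mod_cast le_max_left i j)
    · exact Iic_subset_Iic.mpr (by exact_mod_cast le_max_right i j)
  refine Measure.ext_of_singleton (fun x => ?_)
  induction x using ENat.recTopCoe with
  | top =>
    have hset : ({⊤} : Set ℕ∞) = univ \ ⋃ n : ℕ, Iic ((n:ℕ):ℕ∞) := by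
      ext x
      simp only [Set.mem_singleton_iff, Set.mem_diff, Set.mem_univ, true_and, Set.mem_iUnion,
        Set.mem_Iic, not_exists, not_le]
      constructor
      · intro hx n; rw [hx]; exact lt_of_le_of_ne le_top (ENat.coe_ne_top n)
      · intro hx
        by_contra hc
        lift x to ℕ using hc with m hm
        exact lt_irrefl _ (hx m)
    rw [hset,
      measure_diff (subset_univ _) (measSet_enat _).nullMeasurableSet (measure_ne_top μ _),
      measure_diff (subset_univ _) (measSet_enat _).nullMeasurableSet (measure_ne_top ν _),
      measure_univ, measure_univ, hU μ, hU ν]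
    congr 1
    exact iSup_congr h
  | coe n =>
    induction n with
    | zero =>
      have h0 : ({((0:ℕ):ℕ∞)} : Set ℕ∞) = Iic ((0:ℕ):ℕ∞) := by
        ext x
        simp [nonpos_iff_eq_zero]
      rw [h0]; exact h 0
    | succ m _ =>
      have hd : ({((m+1:ℕ):ℕ∞)} : Set ℕ∞) = Iic ((m+1:ℕ):ℕ∞) \ Iic ((m:ℕ):ℕ∞) := by
        ext x
        simp only [Set.mem_singleton_iff, Set.mem_diff, Set.mem_Iic, not_le]
        constructor
        · intro hx
          rw [hx]
          exact ⟨le_rfl, by exact_mod_cast Nat.lt_succ_self m⟩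
        · rintro ⟨h1, h2⟩
          refine le_antisymm h1 ?_
          rw [show ((m+1:ℕ):ℕ∞) = (m:ℕ∞) + 1 by push_cast; rfl]
          exact (ENat.add_one_le_iff (ENat.coe_ne_top m)).mpr h2
      have hsub : Iic ((m:ℕ):ℕ∞) ⊆ Iic ((m+1:ℕ):ℕ∞) :=
        Iic_subset_Iic.mpr (by exact_mod_cast Nat.le_succ m)
      rw [hd,
        measure_diff hsub (measSet_enat _).nullMeasurableSet (measure_ne_top μ _),
        measure_diff hsub (measSet_enat _).nullMeasurableSet (measure_ne_top ν _),
        h (m+1), h m]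

lemma quant_law (μ : Measure ℕ∞) [IsProbabilityMeasure μ] :
    (volume.restrict (Ioc (0:ℝ) 1)).map (quant μ) = μ := by
  haveI : IsProbabilityMeasure (volume.restrict (Ioc (0:ℝ) 1)) :=
    ⟨by rw [Measure.restrict_apply_univ, Real.volume_Ioc]; norm_num⟩
  haveI : IsProbabilityMeasure ((volume.restrict (Ioc (0:ℝ) 1)).map (quant μ)) :=
    Measure.isProbabilityMeasure_map (measurable_quant μ).aemeasurable
  refine enat_ext_of_Iic _ _ (fun n => ?_)
  rw [Measure.map_apply (measurable_quant μ) (measSet_enat _), quant_preimage_Iic,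
    Measure.restrict_apply measurableSet_Iic]
  have ht1 : (μ (Iic (n:ℕ∞))).toReal ≤ 1 := by
    rw [← ENNReal.toReal_one]
    exact ENNReal.toReal_mono ENNReal.one_ne_top prob_le_one
  have hseteq : Iic ((μ (Iic (n:ℕ∞))).toReal) ∩ Ioc 0 1
      = Ioc 0 ((μ (Iic (n:ℕ∞))).toReal) := by
    ext u
    simp only [Set.mem_inter_iff, Set.mem_Iic, Set.mem_Ioc]
    constructor
    · rintro ⟨h1, h2, _⟩; exact ⟨h2, h1⟩
    · rintro ⟨h1, h2⟩; exact ⟨h2, h1, le_trans h2 ht1⟩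
  rw [hseteq, Real.volume_Ioc, sub_zero, ENNReal.ofReal_toReal (measure_ne_top μ _)]

lemma qm_law (μ : Measure ℕ∞) [IsProbabilityMeasure μ] : volC.map (qm μ) = μ := by
  have hmk := AddCircle.measurePreserving_mk (T := 1) 0
  rw [volC, ← hmk.map_eq, Measure.map_map (measurable_qm μ) hmk.measurable]
  have hae : (qm μ ∘ ((↑·) : ℝ → Circ)) =ᵐ[volume.restrict (Ioc (0:ℝ) (0+1))] quant μ := by
    refine (ae_restrict_mem measurableSet_Ioc).mono (fun u hu => ?_)
    exact AddCircle.liftIoc_coe_apply hu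
  rw [Measure.map_congr hae, show (0:ℝ)+1 = 1 by ring]
  exact quant_law μ

noncomputable def traj (Z : Cfg) (e : ℕ → ℕ∞) : ℕ → Cfg
  | 0 => Z
  | n+1 => ibmStep (e (n+1)) (traj Z e n)

end IBMAux

/-- **increasing coupling.** If `μ([0,i]) ≤ ν([0,i])` for every `i ≥ 0` and
`X₀ ⪯ Y₀`, then one can couple an IBM(μ) started from `X₀` with an IBM(ν) started from
`Y₀` so that almost surely `X_n ⪯ Y_n` for every `n`. -/
theorem stmt4 (μ ν : Measure ℕ∞)
    (hμ : IsProbabilityMeasure μ) (hν : IsProbabilityMeasure ν)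
    (hdom : ∀ i : ℕ, μ {x : ℕ∞ | x ≤ (i : ℕ∞)} ≤ ν {x : ℕ∞ | x ≤ (i : ℕ∞)})
    (X₀ Y₀ : Cfg) (hX₀ : IsConfig X₀) (hY₀ : IsConfig Y₀) (hle : cfgLE X₀ Y₀) :
    ∃ (Ω : Type) (_ : MeasurableSpace Ω) (P : Measure Ω) (_ : IsProbabilityMeasure P)
      (X Y : ℕ → Ω → Cfg),
      IsIBM μ P X₀ X ∧ IsIBM ν P Y₀ Y ∧
      ∀ᵐ ω ∂P, ∀ n : ℕ, cfgLE (X n ω) (Y n ω) := by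
  classical
  obtain ⟨f0, hf0⟩ := hX₀
  obtain ⟨g0, hg0⟩ := hY₀
  have hdom' : ∀ x : ℕ∞, μ (Set.Iic x) ≤ ν (Set.Iic x) := by
    intro x
    induction x using ENat.recTopCoe with
    | top => rw [Set.Iic_top, measure_univ, measure_univ]
    | coe i => exact hdom i
  have hqm : ∀ c : IBMAux.Circ, IBMAux.qm ν c ≤ IBMAux.qm μ c :=
    fun c => IBMAux.quant_mono_meas hdom' _
  refine ⟨IBMAux.GG, inferInstance, IBMAux.PP, inferInstance,
    (fun n ω => IBMAux.traj X₀ (fun k => IBMAux.qm μ (ω k)) n),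
    (fun n ω => IBMAux.traj Y₀ (fun k => IBMAux.qm ν (ω k)) n), ?_, ?_, ?_⟩
  · refine ⟨fun n ω => IBMAux.qm μ (ω n), ?_, ?_, fun ω => rfl, fun n ω => rfl⟩
    · exact IBMAux.coords_indep.comp (fun _ => IBMAux.qm μ) (fun _ => IBMAux.measurable_qm μ)
    · intro n
      have hh : Measure.map (IBMAux.qm μ ∘ (fun g : IBMAux.GG => g n)) IBMAux.PP = μ := by
        rw [← Measure.map_map (IBMAux.measurable_qm μ) (measurable_pi_apply n),
          IBMAux.coord_law, IBMAux.qm_law]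
      exact hh
  · refine ⟨fun n ω => IBMAux.qm ν (ω n), ?_, ?_, fun ω => rfl, fun n ω => rfl⟩
    · exact IBMAux.coords_indep.comp (fun _ => IBMAux.qm ν) (fun _ => IBMAux.measurable_qm ν)
    · intro n
      have hh : Measure.map (IBMAux.qm ν ∘ (fun g : IBMAux.GG => g n)) IBMAux.PP = ν := by
        rw [← Measure.map_map (IBMAux.measurable_qm ν) (measurable_pi_apply n),
          IBMAux.coord_law, IBMAux.qm_law]
      exact hh
  · refine Filter.Eventually.of_forall (fun ω n => ?_)
    have key : ∀ m : ℕ,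
        (∃ f, ∀ k, (IBMAux.traj X₀ (fun k => IBMAux.qm μ (ω k)) m) k = 0 ↔ f < k)
        ∧ (∃ g, ∀ k, (IBMAux.traj Y₀ (fun k => IBMAux.qm ν (ω k)) m) k = 0 ↔ g < k)
        ∧ IBMAux.TLE (IBMAux.traj X₀ (fun k => IBMAux.qm μ (ω k)) m)
            (IBMAux.traj Y₀ (fun k => IBMAux.qm ν (ω k)) m) := by
      intro m
      induction m with
      | zero => exact ⟨⟨f0, hf0⟩, ⟨g0, hg0⟩, IBMAux.TLE_of_cfgLE hf0 hg0 hle⟩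
      | succ m ih =>
        obtain ⟨⟨f, hf⟩, ⟨g, hg⟩, hT⟩ := ih
        exact ⟨IBMAux.isConfig_ibmStep hf _, IBMAux.isConfig_ibmStep hg _,
          IBMAux.TLE_ibmStep hf hg hT (hqm (ω (m+1)))⟩
    obtain ⟨⟨f, hf⟩, ⟨g, hg⟩, hT⟩ := key n
    exact IBMAux.cfgLE_of_TLE hf hg hT
end

section
/- Let k ≥ 1 and let α be a triangular selection word with ϑ_1(α) = k. Then α is k-coupling: for all configurations X, Y ∈ 𝕊, Π_k(αX) = Π_k(αY). -/
open MeasureTheory ProbabilityTheory Filter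

/-- Action of the word `α_ℓ ⋯ α_1` (given by `a i = α_i`) on a configuration:
apply `Φ_{α_1}` first, then `Φ_{α_2}`, …, finally `Φ_{α_ℓ}`. -/
noncomputable def wordAct (a : ℕ → ℕ) : ℕ → Cfg → Cfg
  | 0, X => X
  | n + 1, X => ibmStep ((a (n + 1) : ℕ∞)) (wordAct a n X)

lemma front_spec (X : Cfg) (f : ℤ) (hf : ∀ k, X k = 0 ↔ f < k) : front X = f := by
  have : {k : ℤ | X k ≠ 0} = Set.Iic f := by
    ext k; simp [hf k, not_lt]
  rw [front, this, csSup_Iic]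

lemma tailSum_eq_sum (X : Cfg) (m : ℤ) (s : Finset ℤ)
    (h : ∀ j, m < j → X j ≠ 0 → j ∈ s) :
    tailSum X m = ∑ j ∈ s, if m < j then X j else 0 := by
  apply le_antisymm
  · apply iSup_le; intro t
    calc ∑ j ∈ t, (if m < j then X j else 0)
        ≤ ∑ j ∈ t ∪ s, (if m < j then X j else 0) :=
          Finset.sum_le_sum_of_subset (by exact Finset.subset_union_left ..)
      _ = ∑ j ∈ s, (if m < j then X j else 0) := by
          refine (Finset.sum_subset (by exact Finset.subset_union_right ..) ?_).symm
          intro j hj hjs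
          by_cases hm : m < j
          · simp only [if_pos hm]
            by_contra hne; exact hjs (h j hm hne)
          · simp [hm]
  · exact le_iSup (fun s : Finset ℤ => ∑ j ∈ s, if m < j then X j else 0) s

lemma tailSum_antitone (X : Cfg) : Antitone (tailSum X) := by
  intro m m' hm
  apply iSup_le; intro s
  refine le_trans ?_ (le_iSup (fun s : Finset ℤ => ∑ j ∈ s, if m < j then X j else 0) s)
  apply Finset.sum_le_sum
  intro j _
  by_cases h : m' < j
  · rw [if_pos h, if_pos (lt_of_le_of_lt hm h)]
  · simp [h]

lemma binOf_eq (X : Cfg) (ξ : ℕ∞) (b : ℤ) (h1 : tailSum X b < ξ)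
    (h2 : ξ ≤ tailSum X (b - 1)) : binOf X ξ = b := by
  refine IsLeast.csInf_eq ⟨h1, ?_⟩
  intro m hm
  by_contra hmb
  push_neg at hmb
  have : tailSum X (b-1) ≤ tailSum X m := tailSum_antitone X (by omega)
  exact absurd hm (not_lt.2 (le_trans h2 this))

lemma key (ℓ : ℕ) (a : ℕ → ℕ) (htri : ∀ i, 1 ≤ i → i ≤ ℓ → 1 ≤ a i ∧ a i ≤ i) :
    ∀ i, i ≤ ℓ → ∃ (g : ℤ → ℕ) (t : ℤ),
      (∀ r, g r ≠ 0 ↔ 1 ≤ r ∧ r ≤ t) ∧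
      (∑ r ∈ Finset.Ioc 0 t, g r) = i ∧
      (((Finset.Icc 1 i).filter fun n => a n = 1).card : ℤ) ≤ t ∧
      (∀ X : Cfg, IsConfig X → ∀ j, wordAct a i X j = X j + (g (j - front X) : ℕ∞)) := by
  intro i
  induction i with
  | zero =>
    exact fun _ => ⟨fun _ => 0, 0, by intro r; simp; omega, by simp, by simp,
      fun X _ j => by simp [wordAct]⟩
  | succ i ih =>
    intro hi
    obtain ⟨g, t, hsupp, hsum, hcard, hrep⟩ := ih (by omega)
    have ht0 : 0 ≤ t := le_trans (by positivity) hcard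
    obtain ⟨hξ1, hξ2⟩ := htri (i+1) (by omega) hi
    set ξ := a (i+1) with hξdef
    have hQex : ∃ c : ℕ, (∑ r ∈ Finset.Ioc (c:ℤ) t, g r) < ξ := by
      refine ⟨t.toNat, ?_⟩
      rw [show ((t.toNat : ℤ)) = t by omega, Finset.Ioc_self, Finset.sum_empty]
      omega
    set c := Nat.find hQex with hcdef
    have hc1 : (∑ r ∈ Finset.Ioc (c:ℤ) t, g r) < ξ := Nat.find_spec hQex
    have hct : (c:ℤ) ≤ t := by
      have : c ≤ t.toNat := Nat.find_min' hQex (by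
        rw [show ((t.toNat : ℤ)) = t by omega, Finset.Ioc_self, Finset.sum_empty]; omega)
      omega
    have hc0 : ∀ hc : 1 ≤ c, ξ ≤ ∑ r ∈ Finset.Ioc ((c:ℤ) - 1) t, g r := by
      intro hc
      have h := Nat.find_min hQex (show c - 1 < c by omega)
      rw [show (((c-1:ℕ)):ℤ) = (c:ℤ) - 1 by omega] at h
      omega
    -- if ξ = 1 then c = t
    have hc_top : ξ = 1 → (c:ℤ) = t := by
      intro h1
      refine le_antisymm hct ?_
      have : t.toNat ≤ c := by
        refine Nat.le_find_iff hQex t.toNat |>.mpr ?_ |>.trans le_rfl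
        intro m hm
        simp only [not_lt]
        have htpos : 1 ≤ t := by omega
        have hmem : t ∈ Finset.Ioc (m:ℤ) t := by
          rw [Finset.mem_Ioc]; omega
        have := Finset.single_le_sum (f := g) (fun r _ => Nat.zero_le _) hmem
        have hgt : g t ≠ 0 := (hsupp t).mpr ⟨htpos, le_rfl⟩
        omega
      omega
    set t' := max t ((c:ℤ)+1) with ht'def
    have ht'1 : t ≤ t' := le_max_left _ _
    have ht'2 : (c:ℤ)+1 ≤ t' := le_max_right _ _
    have ht'3 : t' = t ∨ t' = (c:ℤ)+1 := max_choice _ _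
    clear_value ξ c t'
    clear hcdef ht'def
    refine ⟨fun r => g r + (if r = (c:ℤ)+1 then 1 else 0), t', ?_, ?_, ?_, ?_⟩
    · intro r
      rcases eq_or_ne r ((c:ℤ)+1) with h | h
      · subst h
        simp only [if_pos rfl]
        simp only [if_true]
        omega
      · simp only [if_neg h, add_zero]
        rw [hsupp r]
        omega
    · rw [Finset.sum_add_distrib]
      have e1 : ∑ r ∈ Finset.Ioc 0 t', g r = ∑ r ∈ Finset.Ioc 0 t, g r := by
        refine (Finset.sum_subset (Finset.Ioc_subset_Ioc_right ht'1) ?_).symm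
        intro r hr hr'
        rw [Finset.mem_Ioc] at hr
        rw [Finset.mem_Ioc] at hr'
        by_contra hne
        have := (hsupp r).mp hne
        omega
      have e2 : ∑ r ∈ Finset.Ioc (0:ℤ) t', (if r = (c:ℤ)+1 then 1 else 0) = 1 := by
        rw [Finset.sum_ite_eq' (Finset.Ioc (0:ℤ) t') ((c:ℤ)+1) (fun _ => 1),
          if_pos (by rw [Finset.mem_Ioc]; omega)]
      rw [e1, e2, hsum]
    · have hIcc : Finset.Icc 1 (i+1) = insert (i+1) (Finset.Icc 1 i) := by
        ext x; simp only [Finset.mem_Icc, Finset.mem_insert]; omega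
      rw [hIcc, Finset.filter_insert]
      by_cases h1 : a (i+1) = 1
      · rw [if_pos h1, Finset.card_insert_of_notMem (by simp)]
        have := hc_top (hξdef.trans h1)
        push_cast
        omega
      · rw [if_neg h1]
        omega
    · intro X hX j
      obtain ⟨f, hf⟩ := hX
      have hfr : front X = f := front_spec X f hf
      set W := wordAct a i X with hWdef
      have hW : ∀ m, W m = X m + (g (m - f) : ℕ∞) := fun m => by
        rw [hWdef, hrep X ⟨f, hf⟩ m, hfr]
      have hXz : ∀ m : ℤ, f < m → X m = 0 := fun m hm => (hf m).mpr hm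
      have hside : ∀ m : ℤ, f - 1 ≤ m → ∀ p : ℤ, m < p → W p ≠ 0 → p ∈ Finset.Icc (m+1) (f+t) := by
        intro m hm p hp hne
        rw [Finset.mem_Icc]
        refine ⟨by omega, ?_⟩
        by_contra hgt
        push_neg at hgt
        apply hne
        rw [hW p, hXz p (by omega)]
        have hg : g (p - f) = 0 := by
          by_contra hg
          have := (hsupp (p - f)).mp hg
          omega
        simp [hg]
      have hsumW : ∀ m : ℤ, f ≤ m →
          ∑ p ∈ Finset.Icc (m+1) (f+t), W p = ((∑ r ∈ Finset.Ioc (m-f) t, g r : ℕ) : ℕ∞) := by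
        intro m hm
        have h1 : ∀ p ∈ Finset.Icc (m+1) (f+t), W p = (g (p - f) : ℕ∞) := by
          intro p hp
          rw [Finset.mem_Icc] at hp
          rw [hW p, hXz p (by omega), zero_add]
        rw [Finset.sum_congr rfl h1]
        have h2 : Finset.Icc (m+1) (f+t) = Finset.map (addLeftEmbedding f) (Finset.Icc (m+1-f) t) := by
          rw [Finset.map_add_left_Icc]
          congr 1
          omega
        have h3 : Finset.Ioc (m-f) t = Finset.Icc (m+1-f) t := by
          ext r; simp only [Finset.mem_Ioc, Finset.mem_Icc]; omega
        rw [h2, Finset.sum_map, h3, Nat.cast_sum]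
        apply Finset.sum_congr rfl
        intro r _
        simp [addLeftEmbedding_apply]
      have htail : ∀ m : ℤ, f ≤ m →
          tailSum W m = ((∑ r ∈ Finset.Ioc (m-f) t, g r : ℕ) : ℕ∞) := by
        intro m hm
        rw [tailSum_eq_sum W m (Finset.Icc (m+1) (f+t)) (hside m (by omega))]
        rw [← hsumW m hm]
        apply Finset.sum_congr rfl
        intro p hp
        rw [Finset.mem_Icc] at hp
        rw [if_pos (by omega)]
      have hBlt : tailSum W (f + c) < (ξ : ℕ∞) := by
        rw [htail (f + c) (by omega), show f + (c:ℤ) - f = (c:ℤ) by omega]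
        exact_mod_cast hc1
      have hBge : (ξ : ℕ∞) ≤ tailSum W (f + c - 1) := by
        rcases Nat.eq_zero_or_pos c with h0 | hpos
        · have hle : X f + (i : ℕ∞) ≤ tailSum W (f - 1) := by
            have hcomp : ∑ p ∈ Finset.Icc f (f+t), (if f - 1 < p then W p else 0)
                = X f + (i : ℕ∞) := by
              have hins : Finset.Icc f (f+t) = insert f (Finset.Icc (f+1) (f+t)) := by
                ext x; simp only [Finset.mem_Icc, Finset.mem_insert]; omega
              rw [hins, Finset.sum_insert (by rw [Finset.mem_Icc]; omega)]
              have h1 : ∀ p ∈ Finset.Icc (f+1) (f+t), (if f - 1 < p then W p else 0) = W p := by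
                intro p hp
                rw [Finset.mem_Icc] at hp
                rw [if_pos (by omega)]
              rw [Finset.sum_congr rfl h1, hsumW f le_rfl,
                show f - f = (0:ℤ) by omega, hsum,
                if_pos (by omega : f - 1 < f), hW f,
                show f - f = (0:ℤ) by omega]
              have hg0 : g 0 = 0 := by
                by_contra hg
                have := (hsupp 0).mp hg
                omega
              simp [hg0]
            calc X f + (i : ℕ∞) = ∑ p ∈ Finset.Icc f (f+t), (if f - 1 < p then W p else 0) :=
                  hcomp.symm
              _ ≤ tailSum W (f-1) :=
                  le_iSup (fun s : Finset ℤ => ∑ p ∈ s, if f - 1 < p then W p else 0)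
                    (Finset.Icc f (f+t))
          have hXf : (1 : ℕ∞) ≤ X f := by
            refine ENat.one_le_iff_ne_zero.mpr ?_
            intro h
            have := (hf f).mp h
            omega
          have hle2 : (ξ : ℕ∞) ≤ X f + (i : ℕ∞) := by
            calc (ξ : ℕ∞) ≤ ((i + 1 : ℕ) : ℕ∞) := by exact_mod_cast hξ2
              _ = 1 + (i : ℕ∞) := by push_cast; ring
              _ ≤ X f + (i : ℕ∞) := add_le_add_left hXf _
          rw [h0]
          push_cast
          rw [show f + 0 - 1 = f - 1 by ring]
          exact le_trans hle2 hle
        · rw [htail (f + c - 1) (by omega), show f + (c:ℤ) - 1 - f = (c:ℤ) - 1 by omega]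
          exact_mod_cast hc0 hpos
      have hB : binOf W (ξ : ℕ∞) = f + c := binOf_eq W (ξ:ℕ∞) (f + c) hBlt hBge
      have hξ0 : (ξ : ℕ∞) ≠ 0 := Nat.cast_ne_zero.mpr (by omega)
      have hξtop : (ξ : ℕ∞) ≠ ⊤ := by simp
      have hstep : wordAct a (i+1) X j = ibmStep ((a (i+1) : ℕ∞)) W j := rfl
      rw [hstep, ← hξdef, ibmStep, if_neg hξ0, if_neg hξtop]
      rw [hB, hW j, hfr]
      have heq : ((g (j-f) + if j - f = (c:ℤ)+1 then 1 else 0 : ℕ) : ℕ∞)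
          = (g (j-f) : ℕ∞) + (if j = f + (c:ℤ) + 1 then 1 else 0) := by
        by_cases h'' : j = f + (c:ℤ) + 1
        · rw [if_pos h'', if_pos (show j - f = (c:ℤ)+1 by omega)]
          push_cast; ring
        · rw [if_neg h'', if_neg (show ¬ (j - f = (c:ℤ)+1) by omega)]
          push_cast; ring
      rw [heq, add_assoc]

/-- Let `k ≥ 1` and let `α = α_ℓ ⋯ α_1` be a triangular selection word
(`1 ≤ α_i ≤ i`) with exactly `k` occurrences of the letter `1`.  Then `α` is `k`-coupling:
for all configurations `X, Y`, the contents of the `k` rightmost nonempty bins of `αX`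
and `αY` coincide, i.e. `Π_k(αX) = Π_k(αY)`. -/
theorem stmt5 (k : ℕ) (hk : 1 ≤ k) (ℓ : ℕ) (hℓ : 1 ≤ ℓ) (a : ℕ → ℕ)
    (htri : ∀ i, 1 ≤ i → i ≤ ℓ → 1 ≤ a i ∧ a i ≤ i)
    (hcount : ((Finset.Icc 1 ℓ).filter fun i => a i = 1).card = k)
    (X Y : Cfg) (hX : IsConfig X) (hY : IsConfig Y) :
    ∀ j < k,
      wordAct a ℓ X (front (wordAct a ℓ X) - j) =
      wordAct a ℓ Y (front (wordAct a ℓ Y) - j) := by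
  obtain ⟨g, t, hsupp, hsum, hcard, hrep⟩ := key ℓ a htri ℓ le_rfl
  rw [hcount] at hcard
  intro j hj
  have hjt : (j : ℤ) < t := by
    have : (j : ℤ) < (k : ℤ) := by exact_mod_cast hj
    omega
  have ht1 : 1 ≤ t := by omega
  have main : ∀ Z : Cfg, IsConfig Z →
      wordAct a ℓ Z (front (wordAct a ℓ Z) - j) = (g (t - j) : ℕ∞) := by
    intro Z hZ
    obtain ⟨f, hf⟩ := hZ
    have hfr : front Z = f := front_spec Z f hf
    have hW : ∀ m, wordAct a ℓ Z m = Z m + (g (m - f) : ℕ∞) := fun m => by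
      rw [hrep Z ⟨f, hf⟩ m, hfr]
    have hfront : front (wordAct a ℓ Z) = f + t := by
      apply front_spec
      intro m
      rw [hW m]
      rw [add_eq_zero]
      constructor
      · rintro ⟨h1, h2⟩
        have h1' := (hf m).mp h1
        have h2' : g (m - f) = 0 := by exact_mod_cast h2
        have := fun h => (hsupp (m - f)).mpr h
        by_contra hc
        push_neg at hc
        exact absurd (this ⟨by omega, by omega⟩) (by simp [h2'])
      · intro h
        have h1 : Z m = 0 := (hf m).mpr (by omega)
        have h2 : g (m - f) = 0 := by
          by_contra hg
          have := (hsupp (m - f)).mp hg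
          omega
        exact ⟨h1, by exact_mod_cast h2⟩
    rw [hfront, hW (f + t - j), (hf (f + t - j)).mpr (by omega), zero_add,
      show f + t - (j:ℤ) - f = t - j by ring]
  rw [main X hX, main Y hY]
end

section
/- Let (ξ_n)_{n∈ℤ} be i.i.d. random variables with values in ℕ = {1,2,...}, with E[ξ_0] < ∞ and P(ξ_0 = 1) > 0. Define the random set ℛ := {k ∈ ℤ : ξ_{k+i} ≤ i+1 for all i ≥ 0}. Then the law of ℛ is invariant under integer translations, and almost surely both ℛ ∩ [0,∞) and ℛ ∩ (−∞,0] are infinite sets. -/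
open MeasureTheory ProbabilityTheory Filter Set
open scoped ENNReal NNReal

set_option linter.unusedSectionVars false
set_option maxHeartbeats 1000000

section aux

variable {Ω : Type} [mΩ : MeasurableSpace Ω] {P : Measure Ω} [IsProbabilityMeasure P]
  {ξ ξ' : ℤ → Ω → ℕ}

/-- product formula for reindexed independent family -/
lemma reindex_prod {κ : Type} [DecidableEq κ]
    (hind : iIndepFun ξ P)
    (g : κ → ℤ) (hg : Function.Injective g) (s : Finset κ) (t : κ → Set ℕ)
    (ht : ∀ i, MeasurableSet (t i)) :
    P (⋂ i ∈ s, ξ (g i) ⁻¹' t i) = ∏ i ∈ s, P (ξ (g i) ⁻¹' t i) := by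
  classical
  set T : ℤ → Set ℕ := fun j => ⋃ i ∈ s.filter (fun i => g i = j), t i with hT
  have hTg : ∀ i ∈ s, T (g i) = t i := by
    intro i hi
    have : s.filter (fun i' => g i' = g i) = {i} := by
      ext i'; simp only [Finset.mem_filter, Finset.mem_singleton]
      exact ⟨fun h => hg h.2, fun h => by subst h; exact ⟨hi, rfl⟩⟩
    have h2 : ⋃ i' ∈ ({i} : Finset κ), t i' = t i := by simp
    rw [hT]; dsimp only; rw [this, h2]
  have hmem : ∀ j, MeasurableSet[(inferInstance : MeasurableSpace ℕ).comap (ξ j)]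
      (ξ j ⁻¹' T j) := by
    intro j
    exact ⟨T j, (Finset.measurableSet_biUnion _ (fun i _ => ht i)), rfl⟩
  have h1 : P (⋂ j ∈ s.image g, ξ j ⁻¹' T j) = ∏ j ∈ s.image g, P (ξ j ⁻¹' T j) :=
    hind.meas_biInter (fun j _ => hmem j)
  have h2 : (⋂ j ∈ s.image g, ξ j ⁻¹' T j) = ⋂ i ∈ s, ξ (g i) ⁻¹' t i := by
    ext ω
    simp only [Set.mem_iInter, Finset.mem_image]
    constructor
    · rintro h i hi
      have := h (g i) ⟨i, hi, rfl⟩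
      rwa [hTg i hi] at this
    · rintro h j ⟨i, hi, rfl⟩
      rw [hTg i hi]; exact h i hi
  have h3 : ∏ j ∈ s.image g, P (ξ j ⁻¹' T j) = ∏ i ∈ s, P (ξ (g i) ⁻¹' t i) := by
    rw [Finset.prod_image (fun a _ b _ h => hg h)]
    exact Finset.prod_congr rfl (fun i hi => by rw [hTg i hi])
  rw [← h2, h1, h3]

/-- identical marginals on any measurable set -/
lemma marginal_eq (hmeas : ∀ n, Measurable (ξ n))
    (hident : ∀ n : ℤ, P.map (ξ n) = P.map (ξ 0)) (n : ℤ) {t : Set ℕ}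
    (ht : MeasurableSet t) : P (ξ n ⁻¹' t) = P (ξ 0 ⁻¹' t) := by
  rw [← Measure.map_apply (hmeas n) ht, ← Measure.map_apply (hmeas 0) ht, hident n]


lemma prod_one_sub_ge (s : Finset ℕ) (f : ℕ → ℝ) (h0 : ∀ i ∈ s, 0 ≤ f i)
    (h1 : ∀ i ∈ s, f i ≤ 1) :
    1 - ∑ i ∈ s, f i ≤ ∏ i ∈ s, (1 - f i) := by
  classical
  induction s using Finset.induction_on with
  | empty => simp
  | @insert a s' hx ih =>
    rw [Finset.sum_insert hx, Finset.prod_insert hx]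
    have ha0 : 0 ≤ f a := h0 a (Finset.mem_insert_self a s')
    have ha1 : f a ≤ 1 := h1 a (Finset.mem_insert_self a s')
    have ih' := ih (fun i hi => h0 i (Finset.mem_insert_of_mem hi))
      (fun i hi => h1 i (Finset.mem_insert_of_mem hi))
    have hs0 : 0 ≤ ∑ i ∈ s', f i := Finset.sum_nonneg (fun i hi => h0 i (Finset.mem_insert_of_mem hi))
    nlinarith [mul_le_mul_of_nonneg_left ih' (by linarith : (0:ℝ) ≤ 1 - f a)]


lemma tail_sum_ne_top {X : Ω → ℕ} (hX : Measurable X)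
    (hfin : ∫⁻ ω, (X ω : ℝ≥0∞) ∂P ≠ ⊤) :
    ∑' i : ℕ, P (X ⁻¹' Set.Ici (i + 2)) ≠ ⊤ := by
  classical
  have hms : ∀ i : ℕ, MeasurableSet (X ⁻¹' Set.Ici (i + 2)) := fun i => hX measurableSet_Ici
  have hle : ∀ N : ℕ, ∑ i ∈ Finset.range N, P (X ⁻¹' Set.Ici (i + 2))
      ≤ ∫⁻ ω, (X ω : ℝ≥0∞) ∂P := by
    intro N
    calc ∑ i ∈ Finset.range N, P (X ⁻¹' Set.Ici (i + 2))
        = ∑ i ∈ Finset.range N,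
            ∫⁻ ω, Set.indicator (X ⁻¹' Set.Ici (i + 2)) (fun _ => 1) ω ∂P := by
          exact Finset.sum_congr rfl fun i _ => (lintegral_indicator_one (hms i)).symm
      _ = ∫⁻ ω, ∑ i ∈ Finset.range N,
            Set.indicator (X ⁻¹' Set.Ici (i + 2)) (fun _ => 1) ω ∂P :=
          (lintegral_finset_sum _ (fun i _ => measurable_const.indicator (hms i))).symm
      _ ≤ ∫⁻ ω, (X ω : ℝ≥0∞) ∂P := by
          refine lintegral_mono fun ω => ?_
          have hcard : ((Finset.range N).filter (fun i => i + 2 ≤ X ω)).card ≤ X ω := by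
            have hsub : (Finset.range N).filter (fun i => i + 2 ≤ X ω)
                ⊆ Finset.range (X ω) := by
              intro i hi
              simp only [Finset.mem_filter, Finset.mem_range] at hi ⊢
              omega
            simpa using Finset.card_le_card hsub
          calc ∑ i ∈ Finset.range N, Set.indicator (X ⁻¹' Set.Ici (i+2)) (fun _ => (1:ℝ≥0∞)) ω
              = ∑ i ∈ Finset.range N, (if i + 2 ≤ X ω then (1:ℝ≥0∞) else 0) := by
                refine Finset.sum_congr rfl fun i _ => ?_
                rw [Set.indicator_apply]
                congr 1
            _ = (((Finset.range N).filter (fun i => i + 2 ≤ X ω)).card : ℝ≥0∞) :=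
                Finset.sum_boole _ _
            _ ≤ (X ω : ℝ≥0∞) := by exact_mod_cast Nat.cast_le.2 hcard
  exact ne_top_of_le_ne_top hfin (Summable.tsum_le_of_sum_range_le ENNReal.summable hle)

/-- finite dimensional distributions are shift invariant -/
lemma fdd (hmeas : ∀ n, Measurable (ξ n))
    (hind : iIndepFun ξ P)
    (hident : ∀ n : ℤ, P.map (ξ n) = P.map (ξ 0)) (s : Finset ℤ) (m : ℤ) :
    P.map (fun ω => fun i : s => ξ (↑i + m) ω) = P.map (fun ω => fun i : s => ξ (↑i) ω) := by
  classical
  have hmm : ∀ m : ℤ, Measurable (fun ω => fun i : s => ξ (↑i + m) ω) :=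
    fun m => measurable_pi_iff.2 fun i => hmeas _
  have key : ∀ (m : ℤ) (y : ∀ i : s, ℕ),
      P.map (fun ω => fun i : s => ξ (↑i + m) ω) {y} = ∏ i : s, P (ξ 0 ⁻¹' {y i}) := by
    intro m y
    rw [Measure.map_apply (hmm m) (measurableSet_singleton y)]
    have hpre : (fun ω => fun i : s => ξ (↑i + m) ω) ⁻¹' {y}
        = ⋂ i ∈ (Finset.univ : Finset s), ξ ((fun i : s => (↑i + m)) i) ⁻¹' {y i} := by
      ext ω
      simp only [Set.mem_preimage, Set.mem_singleton_iff, funext_iff, Set.mem_iInter,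
        Finset.mem_univ, forall_true_left]
    have hginj : Function.Injective (fun i : s => (↑i : ℤ) + m) := by
      intro a b h
      exact Subtype.coe_injective (add_right_cancel h)
    rw [hpre, reindex_prod hind _ hginj Finset.univ (fun i => {y i})
      (fun i => measurableSet_singleton _)]
    exact Finset.prod_congr rfl (fun i _ => marginal_eq hmeas hident _ (measurableSet_singleton _))
  apply Measure.ext_of_singleton
  intro y
  rw [key m y]
  have h00 : (fun ω => fun i : s => ξ (↑i) ω) = (fun ω => fun i : s => ξ (↑i + 0) ω) := by
    funext ω i; rw [add_zero]
  rw [h00, key 0 y]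

/-- the law of the whole process is shift invariant -/
lemma law_shift (hmeas : ∀ n, Measurable (ξ n))
    (hind : iIndepFun ξ P)
    (hident : ∀ n : ℤ, P.map (ξ n) = P.map (ξ 0)) (m : ℤ) :
    P.map (fun ω => fun n : ℤ => ξ (n + m) ω) = P.map (fun ω => fun n : ℤ => ξ n ω) := by
  classical
  have hmm : ∀ m : ℤ, Measurable (fun ω => fun n : ℤ => ξ (n + m) ω) :=
    fun m => measurable_pi_iff.2 fun n => hmeas _
  have h0 : Measurable (fun ω => fun n : ℤ => ξ n ω) := measurable_pi_iff.2 fun n => hmeas _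
  have i1 : IsProbabilityMeasure (P.map (fun ω => fun n : ℤ => ξ (n + m) ω)) :=
    Measure.isProbabilityMeasure_map (hmm m).aemeasurable
  have i2 : IsProbabilityMeasure (P.map (fun ω => fun n : ℤ => ξ n ω)) :=
    Measure.isProbabilityMeasure_map h0.aemeasurable
  refine ext_of_generate_finite (measurableCylinders (fun _ : ℤ => ℕ))
    generateFrom_measurableCylinders.symm isPiSystem_measurableCylinders ?_ (by simp)
  intro t ht
  obtain ⟨s, S, hS, rfl⟩ := (mem_measurableCylinders t).mp ht
  rw [Measure.map_apply (hmm m) hS.cylinder, Measure.map_apply h0 hS.cylinder]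
  have hres : (fun ω => fun n : ℤ => ξ (n + m) ω) ⁻¹' cylinder s S
      = (fun ω => fun i : s => ξ (↑i + m) ω) ⁻¹' S := rfl
  have hres0 : (fun ω => fun n : ℤ => ξ n ω) ⁻¹' cylinder s S
      = (fun ω => fun i : s => ξ (↑i) ω) ⁻¹' S := rfl
  rw [hres, hres0,
    ← Measure.map_apply (measurable_pi_iff.2 fun i : s => hmeas _) hS,
    ← Measure.map_apply (measurable_pi_iff.2 fun i : s => hmeas _) hS,
    fdd hmeas hind hident s m]


lemma Fmeas (hmeas : ∀ n, Measurable (ξ n)) (m : ℤ) :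
    Measurable (fun ω => fun k : ℤ => ∀ i : ℕ, ξ (k + m + i) ω ≤ i + 1) := by
  refine measurable_pi_iff.2 fun k => ?_
  refine measurableSet_setOf.1 ?_
  have : {ω | ∀ i : ℕ, ξ (k + m + i) ω ≤ i + 1}
      = ⋂ i : ℕ, ξ (k + m + i) ⁻¹' Set.Iic (i + 1) := by
    ext ω; simp [Set.mem_iInter, Set.mem_Iic]
  rw [this]
  exact MeasurableSet.iInter fun i => hmeas _ measurableSet_Iic

lemma part1_law (hmeas : ∀ n, Measurable (ξ n))
    (hind : iIndepFun ξ P)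
    (hident : ∀ n : ℤ, P.map (ξ n) = P.map (ξ 0)) (m : ℤ) :
    P.map (fun ω => fun k : ℤ => ∀ i : ℕ, ξ (k + m + i) ω ≤ i + 1)
      = P.map (fun ω => fun k : ℤ => ∀ i : ℕ, ξ (k + i) ω ≤ i + 1) := by
  classical
  set G : (ℤ → ℕ) → (ℤ → Prop) := fun x k => ∀ i : ℕ, x (k + i) ≤ i + 1 with hG
  have hGmeas : Measurable G := by
    refine measurable_pi_iff.2 fun k => ?_
    refine measurableSet_setOf.1 ?_
    have : {x : ℤ → ℕ | ∀ i : ℕ, x (k + i) ≤ i + 1}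
        = ⋂ i : ℕ, (fun x : ℤ → ℕ => x (k + i)) ⁻¹' Set.Iic (i + 1) := by
      ext x; simp [Set.mem_iInter, Set.mem_Iic]
    rw [hG]; dsimp only
    rw [this]
    exact MeasurableSet.iInter fun i => measurable_pi_apply (k + i) measurableSet_Iic
  have hproc : ∀ m : ℤ, Measurable (fun ω => fun n : ℤ => ξ (n + m) ω) :=
    fun m => measurable_pi_iff.2 fun n => hmeas _
  have hproc0 : Measurable (fun ω => fun n : ℤ => ξ n ω) :=
    measurable_pi_iff.2 fun n => hmeas _
  have hcomp : (fun ω => fun k : ℤ => ∀ i : ℕ, ξ (k + m + i) ω ≤ i + 1)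
      = G ∘ (fun ω => fun n : ℤ => ξ (n + m) ω) := by
    funext ω
    funext k
    show (∀ i : ℕ, ξ (k + m + i) ω ≤ i + 1) = (∀ i : ℕ, ξ ((k + i) + m) ω ≤ i + 1)
    exact propext (forall_congr' fun i => by rw [show k + m + (i:ℤ) = k + i + m by ring])
  have hcomp0 : (fun ω => fun k : ℤ => ∀ i : ℕ, ξ (k + i) ω ≤ i + 1)
      = G ∘ (fun ω => fun n : ℤ => ξ n ω) := rfl
  rw [hcomp, hcomp0, ← Measure.map_map hGmeas (hproc m), ← Measure.map_map hGmeas hproc0,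
    law_shift hmeas hind hident m]

lemma probA_eq (hmeas : ∀ n, Measurable (ξ n))
    (hind : iIndepFun ξ P)
    (hident : ∀ n : ℤ, P.map (ξ n) = P.map (ξ 0)) (k : ℤ) :
    P {ω | ∀ i : ℕ, ξ (k + i) ω ≤ i + 1} = P {ω | ∀ i : ℕ, ξ ((0:ℤ) + i) ω ≤ i + 1} := by
  classical
  have hV : MeasurableSet {g : ℤ → Prop | g 0} := by
    have : {g : ℤ → Prop | g 0} = (fun g : ℤ → Prop => g 0) ⁻¹' {p : Prop | p} := rfl
    rw [this]
    exact measurable_pi_apply (0:ℤ) MeasurableSpace.measurableSet_top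
  have h := part1_law hmeas hind hident k
  have h0meas : Measurable (fun ω => fun k' : ℤ => ∀ i : ℕ, ξ (k' + i) ω ≤ i + 1) := by
    have := Fmeas hmeas 0
    simpa using this
  have happ := congrArg (fun μ => μ {g : ℤ → Prop | g 0}) h
  rw [Measure.map_apply (Fmeas hmeas k) hV, Measure.map_apply h0meas hV] at happ
  have e1 : (fun ω => fun k' : ℤ => ∀ i : ℕ, ξ (k' + k + i) ω ≤ i + 1) ⁻¹' {g | g 0}
      = {ω | ∀ i : ℕ, ξ (k + i) ω ≤ i + 1} := by
    ext ω
    simp only [Set.mem_preimage, Set.mem_setOf_eq, zero_add]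
  have e2 : (fun ω => fun k' : ℤ => ∀ i : ℕ, ξ (k' + i) ω ≤ i + 1) ⁻¹' {g | g 0}
      = {ω | ∀ i : ℕ, ξ ((0:ℤ) + i) ω ≤ i + 1} := by
    ext ω
    simp only [Set.mem_preimage, Set.mem_setOf_eq]
  rw [e1, e2] at happ
  exact happ

lemma pA0_pos (hmeas : ∀ n, Measurable (ξ n))
    (hind : iIndepFun ξ P)
    (hident : ∀ n : ℤ, P.map (ξ n) = P.map (ξ 0))
    (hfin : ∫⁻ ω, (ξ 0 ω : ℝ≥0∞) ∂P ≠ ⊤) (h1 : 0 < P (ξ 0 ⁻¹' {1})) :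
    0 < P (⋂ i : ℕ, ξ (i : ℤ) ⁻¹' Set.Iic (i + 1)) := by
  classical
  set r : ℕ → ℝ≥0∞ := fun i => P (ξ 0 ⁻¹' Set.Iic (i + 1)) with hr
  set aE : ℕ → ℝ≥0∞ := fun i => P (ξ 0 ⁻¹' Set.Ici (i + 2)) with haE
  have hrle : ∀ i, r i ≤ 1 := fun i => prob_le_one
  have hrnetop : ∀ i, r i ≠ ⊤ := fun i => (lt_of_le_of_lt (hrle i) (by norm_num)).ne
  have haele : ∀ i, aE i ≤ 1 := fun i => prob_le_one
  have haenetop : ∀ i, aE i ≠ ⊤ := fun i => (lt_of_le_of_lt (haele i) (by norm_num)).ne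
  have hcompl : ∀ i : ℕ, (ξ 0 ⁻¹' Set.Ici (i + 2)) = (ξ 0 ⁻¹' Set.Iic (i + 1))ᶜ := by
    intro i
    ext ω; simp only [Set.mem_preimage, Set.mem_Ici, Set.mem_compl_iff, Set.mem_Iic]; omega
  have hae_eq : ∀ i, aE i = 1 - r i := by
    intro i
    rw [haE]; dsimp only
    rw [hcompl i, prob_compl_eq_one_sub (hmeas 0 measurableSet_Iic)]
  have hrq : ∀ i, 0 < r i := by
    intro i
    refine lt_of_lt_of_le h1 (measure_mono ?_)
    intro ω hω
    simp only [Set.mem_preimage, Set.mem_singleton_iff] at hω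
    simp [Set.mem_Iic, hω]
  -- real versions
  set rr : ℕ → ℝ := fun i => (r i).toReal with hrr
  set ar : ℕ → ℝ := fun i => (aE i).toReal with har
  have hrr_pos : ∀ i, 0 < rr i := fun i => ENNReal.toReal_pos (hrq i).ne' (hrnetop i)
  have hrr_eq : ∀ i, rr i = 1 - ar i := by
    intro i
    rw [hrr, har]; dsimp only
    rw [hae_eq i, ENNReal.toReal_sub_of_le (by simpa using hrle i) (by norm_num)]
    simp
  have har_nonneg : ∀ i, 0 ≤ ar i := fun i => ENNReal.toReal_nonneg
  have har_le_one : ∀ i, ar i ≤ 1 := by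
    intro i; have := hrr_pos i; rw [hrr_eq i] at this; linarith
  -- tail sum
  have htail : ∑' i : ℕ, aE i ≠ ⊤ := tail_sum_ne_top (hmeas 0) hfin
  obtain ⟨K, hK⟩ : ∃ K : ℕ, ∑' k : ℕ, aE (k + K) < 1 / 2 := by
    have := (ENNReal.tendsto_sum_nat_add aE htail).eventually_lt_const
      (by norm_num : (0:ℝ≥0∞) < 1/2)
    exact this.exists
  -- the decreasing sets
  set D : ℕ → Set Ω := fun N => ⋂ i ∈ Finset.range N, ξ (i : ℤ) ⁻¹' Set.Iic (i + 1) with hD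
  have hDmeas : ∀ N, MeasurableSet (D N) :=
    fun N => Finset.measurableSet_biInter _ (fun i _ => hmeas _ measurableSet_Iic)
  have hDanti : Antitone D := by
    intro N M hNM
    exact Set.biInter_subset_biInter_left (Finset.range_subset_range.2 hNM)
  have hDprod : ∀ N, P (D N) = ∏ i ∈ Finset.range N, r i := by
    intro N
    rw [hD]; dsimp only
    rw [reindex_prod hind (Nat.cast : ℕ → ℤ) Nat.cast_injective _
      (fun i => Set.Iic (i + 1)) (fun i => measurableSet_Iic)]
    exact Finset.prod_congr rfl fun i _ => marginal_eq hmeas hident _ measurableSet_Iic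
  have hInter : (⋂ i : ℕ, ξ (i : ℤ) ⁻¹' Set.Iic (i + 1)) = ⋂ N, D N := by
    ext ω
    simp only [Set.mem_iInter, hD, Finset.mem_range]
    exact ⟨fun h N i _ => h i, fun h i => h (i + 1) i (Nat.lt_succ_self i)⟩
  -- lower bound constant
  set c : ℝ := (∏ i ∈ Finset.range K, rr i) * (1 / 2) with hc
  have hcpos : 0 < c := by
    apply mul_pos _ (by norm_num)
    exact Finset.prod_pos fun i _ => hrr_pos i
  have hbound : ∀ N, ENNReal.ofReal c ≤ P (D N) := by
    intro N
    set M := max N K with hM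
    refine le_trans ?_ (measure_mono (hDanti (le_max_left N K)))
    have hKM : K ≤ M := le_max_right N K
    have hPD : P (D M) = ∏ i ∈ Finset.range M, r i := hDprod M
    have hPDne : P (D M) ≠ ⊤ := (lt_of_le_of_lt prob_le_one (by norm_num)).ne
    rw [ENNReal.ofReal_le_iff_le_toReal hPDne, hPD, ENNReal.toReal_prod]
    have hsplit : (∏ i ∈ Finset.range K, (r i).toReal) * (∏ i ∈ Finset.Ico K M, (r i).toReal)
        = ∏ i ∈ Finset.range M, (r i).toReal := Finset.prod_range_mul_prod_Ico _ hKM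
    rw [← hsplit, hc]
    have hIco_sum : ∑ i ∈ Finset.Ico K M, ar i ≤ 1 / 2 := by
      have h1' : ∑ i ∈ Finset.Ico K M, aE i ≤ ∑' k : ℕ, aE (k + K) := by
        rw [Finset.sum_Ico_eq_sum_range]
        calc ∑ i ∈ Finset.range (M - K), aE (K + i)
            = ∑ i ∈ Finset.range (M - K), aE (i + K) := by
              exact Finset.sum_congr rfl fun i _ => by rw [add_comm]
          _ ≤ ∑' k : ℕ, aE (k + K) := ENNReal.sum_le_tsum _
      have h2' : ∑ i ∈ Finset.Ico K M, aE i ≤ 1 / 2 := le_trans h1' hK.le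
      have h3' : (∑ i ∈ Finset.Ico K M, aE i).toReal = ∑ i ∈ Finset.Ico K M, ar i :=
        ENNReal.toReal_sum (fun i _ => haenetop i)
      rw [← h3']
      calc (∑ i ∈ Finset.Ico K M, aE i).toReal ≤ ((1:ℝ≥0∞) / 2).toReal :=
            ENNReal.toReal_mono (by norm_num) h2'
        _ = 1 / 2 := by norm_num
    have hIco_prod : (1:ℝ)/2 ≤ ∏ i ∈ Finset.Ico K M, (r i).toReal := by
      have := prod_one_sub_ge (Finset.Ico K M) ar (fun i _ => har_nonneg i)
        (fun i _ => har_le_one i)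
      have heq : ∏ i ∈ Finset.Ico K M, (1 - ar i) = ∏ i ∈ Finset.Ico K M, (r i).toReal :=
        Finset.prod_congr rfl fun i _ => by rw [← hrr_eq i]
      rw [heq] at this
      linarith
    have hprodK : (0:ℝ) ≤ ∏ i ∈ Finset.range K, rr i :=
      (Finset.prod_pos fun i _ => hrr_pos i).le
    calc (∏ i ∈ Finset.range K, rr i) * (1/2)
        ≤ (∏ i ∈ Finset.range K, rr i) * ∏ i ∈ Finset.Ico K M, (r i).toReal :=
          mul_le_mul_of_nonneg_left hIco_prod hprodK
      _ = (∏ i ∈ Finset.range K, (r i).toReal) * ∏ i ∈ Finset.Ico K M, (r i).toReal := rfl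
  have hmeasure : P (⋂ N, D N) = ⨅ N, P (D N) := by
    refine Directed.measure_iInter (fun N => (hDmeas N).nullMeasurableSet) ?_ ⟨0, ?_⟩
    · exact hDanti.directed_ge
    · exact (lt_of_le_of_lt prob_le_one (by norm_num)).ne
  rw [hInter, hmeasure]
  refine lt_of_lt_of_le ?_ (le_iInf hbound)
  simpa using hcpos

lemma hAmeas (hmeas : ∀ n, Measurable (ξ n)) (k : ℤ) : MeasurableSet {ω | ∀ i : ℕ, ξ (k + i) ω ≤ i + 1} := by
  have : {ω | ∀ i : ℕ, ξ (k + i) ω ≤ i + 1} = ⋂ i : ℕ, ξ (k + i) ⁻¹' Set.Iic (i + 1) := by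
    ext ω; simp [Set.mem_iInter, Set.mem_Iic]
  rw [this]
  exact MeasurableSet.iInter fun i => hmeas _ measurableSet_Iic

lemma iIndepNat (hind : iIndepFun ξ P) : iIndep (fun n : ℕ =>
    (inferInstance : MeasurableSpace ℕ).comap (ξ (n : ℤ))) P := by
  classical
  rw [iIndep_iff]
  intro S f hf
  have key := hind.meas_biInter (S := S.image (Nat.cast : ℕ → ℤ))
      (s := fun j => f j.toNat) (fun j hj => by
        obtain ⟨n, hn, rfl⟩ := Finset.mem_image.1 hj
        simpa using hf n hn)
  have e1 : (⋂ j ∈ S.image (Nat.cast : ℕ → ℤ), f j.toNat) = ⋂ i ∈ S, f i := by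
    ext ω
    simp only [Set.mem_iInter, Finset.mem_image]
    constructor
    · intro h i hi
      have := h (i : ℤ) ⟨i, hi, rfl⟩
      simpa using this
    · rintro h j ⟨i, hi, rfl⟩
      simpa using h i hi
  have e2 : ∏ j ∈ S.image (Nat.cast : ℕ → ℤ), P (f j.toNat) = ∏ i ∈ S, P (f i) := by
    rw [Finset.prod_image (fun a _ b _ h => Nat.cast_injective h)]
    exact Finset.prod_congr rfl fun i _ => by simp
  rw [← e1, key, e2]

/-- almost surely there are infinitely many nonneg renewal points -/
lemma right_infinite (hmeas : ∀ n, Measurable (ξ n))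
    (hind : iIndepFun ξ P)
    (hident : ∀ n : ℤ, P.map (ξ n) = P.map (ξ 0))
    (hfin : ∫⁻ ω, (ξ 0 ω : ℝ≥0∞) ∂P ≠ ⊤) (h1 : 0 < P (ξ 0 ⁻¹' {1})) :
    P (⋂ n : ℕ, ⋃ k : ℕ, ⋃ (_ : n ≤ k), {ω | ∀ i : ℕ, ξ ((k : ℤ) + i) ω ≤ i + 1}) = 1 := by
  classical
  set A : ℤ → Set Ω := fun k => {ω | ∀ i : ℕ, ξ (k + i) ω ≤ i + 1} with hA
  set U : ℕ → Set Ω := fun n => ⋃ k : ℕ, ⋃ (_ : n ≤ k), A (k : ℤ) with hU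
  have hAm : ∀ k : ℤ, MeasurableSet (A k) := hAmeas hmeas
  have hUm : ∀ n, MeasurableSet (U n) :=
    fun n => MeasurableSet.iUnion fun k => MeasurableSet.iUnion fun _ => hAm _
  have hUanti : Antitone U := by
    intro n m hnm
    refine Set.iUnion_subset fun k => Set.iUnion_subset fun hk => ?_
    exact Set.subset_iUnion_of_subset k (Set.subset_iUnion_of_subset (le_trans hnm hk)
      subset_rfl)
  -- lower bound
  have hA0 : 0 < P (A 0) := by
    have h := pA0_pos hmeas hind hident hfin h1
    have : (⋂ i : ℕ, ξ (i : ℤ) ⁻¹' Set.Iic (i + 1)) = A 0 := by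
      ext ω; simp [hA, Set.mem_iInter, Set.mem_Iic]
    rwa [this] at h
  have hlow : ∀ n, P (A 0) ≤ P (U n) := by
    intro n
    have : A (n : ℤ) ⊆ U n :=
      Set.subset_iUnion_of_subset n (Set.subset_iUnion_of_subset le_rfl subset_rfl)
    calc P (A 0) = P (A (n : ℤ)) := (probA_eq hmeas hind hident _).symm
      _ ≤ P (U n) := measure_mono this
  have hPT : P (⋂ n, U n) = ⨅ n, P (U n) := by
    refine Directed.measure_iInter (fun n => (hUm n).nullMeasurableSet) hUanti.directed_ge
      ⟨0, (lt_of_le_of_lt prob_le_one (by norm_num)).ne⟩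
  -- zero one law
  have h01 : P (⋂ n, U n) = 0 ∨ P (⋂ n, U n) = 1 := by
    refine measure_zero_or_one_of_measurableSet_limsup_atTop
      (s := fun n : ℕ => (inferInstance : MeasurableSpace ℕ).comap (ξ (n : ℤ)))
      (fun n => (hmeas _).comap_le) (iIndepNat hind) ?_
    rw [limsup_eq_iInf_iSup_of_nat, MeasurableSpace.measurableSet_iInf]
    intro n
    set m' : MeasurableSpace Ω := ⨆ i, ⨆ (_ : i ≥ n),
      (inferInstance : MeasurableSpace ℕ).comap (ξ (i : ℤ)) with hm'
    have hAm' : ∀ k : ℕ, n ≤ k → MeasurableSet[m'] (A (k : ℤ)) := by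
      intro k hk
      have : A (k : ℤ) = ⋂ i : ℕ, ξ ((k + i : ℕ) : ℤ) ⁻¹' Set.Iic (i + 1) := by
        ext ω
        simp only [hA, Set.mem_setOf_eq, Set.mem_iInter, Set.mem_preimage, Set.mem_Iic]
        constructor
        · intro h i; have := h i; rwa [show ((k:ℤ) + (i:ℕ)) = ((k + i : ℕ) : ℤ) by push_cast; ring] at this
        · intro h i; have := h i; rwa [show ((k + i : ℕ) : ℤ) = ((k:ℤ) + (i:ℕ)) by push_cast; ring] at this
      rw [this]
      refine MeasurableSet.iInter fun i => ?_
      have hle : (inferInstance : MeasurableSpace ℕ).comap (ξ ((k + i : ℕ) : ℤ)) ≤ m' := by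
        rw [hm']
        exact le_iSup₂ (f := fun j (_ : j ≥ n) =>
          (inferInstance : MeasurableSpace ℕ).comap (ξ (j : ℤ))) (k + i) (le_trans hk (Nat.le_add_right k i))
      exact hle _ ⟨Set.Iic (i + 1), measurableSet_Iic, rfl⟩
    have hUm' : ∀ j : ℕ, MeasurableSet[m'] (U (j + n)) := by
      intro j
      exact MeasurableSet.iUnion fun k => MeasurableSet.iUnion fun hk =>
        hAm' k (le_trans (Nat.le_add_left n j) hk)
    have hTeq : (⋂ n', U n') = ⋂ j : ℕ, U (j + n) := by
      apply Set.Subset.antisymm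
      · exact Set.iInter_mono' fun j => ⟨j + n, subset_rfl⟩
      · intro ω hω
        simp only [Set.mem_iInter] at hω ⊢
        intro n'
        exact hUanti (by omega : n' ≤ n' + n) (hω n')
    rw [hTeq]
    exact MeasurableSet.iInter hUm'
  rcases h01 with h0 | h1'
  · exfalso
    have hge : P (A 0) ≤ P (⋂ n, U n) := by
      rw [hPT]; exact le_iInf hlow
    rw [h0] at hge
    exact hA0.not_ge hge
  · exact h1'

lemma min_prob_zero (hmeas : ∀ n, Measurable (ξ n))
    (hind : iIndepFun ξ P)
    (hident : ∀ n : ℤ, P.map (ξ n) = P.map (ξ 0)) (k : ℤ) :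
    P {ω | (∀ i : ℕ, ξ (k + i) ω ≤ i + 1)
        ∧ ∀ j < k, ¬(∀ i : ℕ, ξ (j + i) ω ≤ i + 1)} = 0 := by
  classical
  set M : ℤ → Set Ω := fun k => {ω | (∀ i : ℕ, ξ (k + i) ω ≤ i + 1)
      ∧ ∀ j < k, ¬(∀ i : ℕ, ξ (j + i) ω ≤ i + 1)} with hM
  have hAm : ∀ k : ℤ, MeasurableSet {ω | ∀ i : ℕ, ξ (k + i) ω ≤ i + 1} := by
    intro k
    have : {ω | ∀ i : ℕ, ξ (k + i) ω ≤ i + 1} = ⋂ i : ℕ, ξ (k + i) ⁻¹' Set.Iic (i + 1) := by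
      ext ω; simp [Set.mem_iInter, Set.mem_Iic]
    rw [this]
    exact MeasurableSet.iInter fun i => hmeas _ measurableSet_Iic
  have hMm : ∀ k : ℤ, MeasurableSet (M k) := by
    intro k
    have : M k = {ω | ∀ i : ℕ, ξ (k + i) ω ≤ i + 1}
        ∩ ⋂ j : ℤ, ⋂ (_ : j < k), {ω | ∀ i : ℕ, ξ (j + i) ω ≤ i + 1}ᶜ := by
      ext ω
      simp only [hM, Set.mem_setOf_eq, Set.mem_inter_iff, Set.mem_iInter, Set.mem_compl_iff]
    rw [this]
    exact (hAm k).inter (MeasurableSet.iInter fun j => MeasurableSet.iInter fun _ =>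
      (hAm j).compl)
  -- translation invariance of P (M k)
  have hMk : ∀ k : ℤ, P (M k) = P (M 0) := by
    intro k
    have hV : MeasurableSet {g : ℤ → Prop | g 0 ∧ ∀ j < (0:ℤ), ¬ g j} := by
      have : {g : ℤ → Prop | g 0 ∧ ∀ j < (0:ℤ), ¬ g j}
          = ((fun g : ℤ → Prop => g 0) ⁻¹' {p : Prop | p})
            ∩ ⋂ j : ℤ, ⋂ (_ : j < (0:ℤ)), (fun g : ℤ → Prop => g j) ⁻¹' {p : Prop | ¬ p} := by
        ext g
        simp only [Set.mem_setOf_eq, Set.mem_inter_iff, Set.mem_preimage, Set.mem_iInter]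
      rw [this]
      exact ((measurable_pi_apply (0:ℤ)) MeasurableSpace.measurableSet_top).inter
        (MeasurableSet.iInter fun j => MeasurableSet.iInter fun _ =>
          (measurable_pi_apply j) MeasurableSpace.measurableSet_top)
    have h := congrArg (fun μ : Measure (ℤ → Prop) =>
      μ {g : ℤ → Prop | g 0 ∧ ∀ j < (0:ℤ), ¬ g j}) (part1_law hmeas hind hident k)
    have h0meas : Measurable (fun ω => fun k' : ℤ => ∀ i : ℕ, ξ (k' + i) ω ≤ i + 1) := by
      have := Fmeas hmeas 0
      simpa using this
    rw [Measure.map_apply (Fmeas hmeas k) hV, Measure.map_apply h0meas hV] at h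
    have e1 : (fun ω => fun k' : ℤ => ∀ i : ℕ, ξ (k' + k + i) ω ≤ i + 1) ⁻¹'
        {g : ℤ → Prop | g 0 ∧ ∀ j < (0:ℤ), ¬ g j} = M k := by
      ext ω
      simp only [Set.mem_preimage, Set.mem_setOf_eq, hM, zero_add]
      constructor
      · rintro ⟨h1, h2⟩
        refine ⟨h1, fun j hj hcon => ?_⟩
        refine h2 (j - k) (by omega) ?_
        rwa [sub_add_cancel]
      · rintro ⟨h1, h2⟩
        refine ⟨h1, fun j hj hcon => ?_⟩
        refine h2 (j + k) (by omega) hcon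
    have e2 : (fun ω => fun k' : ℤ => ∀ i : ℕ, ξ (k' + i) ω ≤ i + 1) ⁻¹'
        {g : ℤ → Prop | g 0 ∧ ∀ j < (0:ℤ), ¬ g j} = M 0 := by
      ext ω
      simp only [Set.mem_preimage, Set.mem_setOf_eq, hM]
    rw [e1, e2] at h
    exact h
  -- disjointness forces zero
  have hzero : P (M 0) = 0 := by
    by_contra hne
    have hdisj : Pairwise (Function.onFun Disjoint fun n : ℕ => M (n : ℤ)) := by
      intro a b hab
      rcases lt_or_gt_of_ne hab with hlt | hlt
      · refine Set.disjoint_left.2 fun ω hωa hωb => ?_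
        exact hωb.2 (a : ℤ) (by exact_mod_cast hlt) hωa.1
      · refine Set.disjoint_left.2 fun ω hωa hωb => ?_
        exact hωa.2 (b : ℤ) (by exact_mod_cast hlt) hωb.1
    have hsum : P (⋃ n : ℕ, M (n : ℤ)) = ∑' n : ℕ, P (M (n : ℤ)) :=
      measure_iUnion hdisj fun n => hMm _
    have htop : ∑' n : ℕ, P (M (n : ℤ)) = ⊤ := by
      have : ∀ n : ℕ, P (M (n : ℤ)) = P (M 0) := fun n => hMk _
      rw [tsum_congr this]
      exact ENNReal.tsum_const_eq_top_of_ne_zero hne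
    have hle : P (⋃ n : ℕ, M (n : ℤ)) ≤ 1 := prob_le_one
    rw [hsum, htop] at hle
    exact absurd hle (by norm_num)
  rw [show {ω | (∀ i : ℕ, ξ (k + i) ω ≤ i + 1)
      ∧ ∀ j < k, ¬(∀ i : ℕ, ξ (j + i) ω ≤ i + 1)} = M k from rfl, hMk k, hzero]

lemma iIndepFun_congr (hind : iIndepFun ξ P)
    (h : ∀ n, ξ n =ᵐ[P] ξ' n) : iIndepFun ξ' P := by
  classical
  rw [iIndepFun_iff] at hind ⊢
  intro s f hf
  choose t ht htpre using fun (i : ℤ) (hi : i ∈ s) => hf i hi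
  set g : ℤ → Set Ω := fun i => if hi : i ∈ s then ξ i ⁻¹' t i hi else ∅ with hg
  have hgmem : ∀ i ∈ s,
      MeasurableSet[(inferInstance : MeasurableSpace ℕ).comap (ξ i)] (g i) := by
    intro i hi
    rw [hg]; dsimp only; rw [dif_pos hi]
    exact ⟨t i hi, ht i hi, rfl⟩
  have hae : ∀ i ∈ s, f i =ᵐ[P] g i := by
    intro i hi
    have : f i = ξ' i ⁻¹' t i hi := (htpre i hi).symm
    rw [this, hg]; dsimp only; rw [dif_pos hi]
    filter_upwards [h i] with ω hω
    show (ξ' i ω ∈ t i hi) = (ξ i ω ∈ t i hi)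
    rw [hω]
  have hiInter : P (⋂ i ∈ s, f i) = P (⋂ i ∈ s, g i) := by
    refine measure_congr (eventuallyEq_set.2 ?_)
    have := (ae_ball_iff (Finset.countable_toSet s)).2 hae
    filter_upwards [this] with ω hω
    simp only [Set.mem_iInter]
    constructor
    · intro hall i hi
      have hmi : (ω ∈ f i) = (ω ∈ g i) := hω i hi
      exact hmi ▸ hall i hi
    · intro hall i hi
      have hmi : (ω ∈ f i) = (ω ∈ g i) := hω i hi
      exact hmi.symm ▸ hall i hi
  have hprod : ∀ i ∈ s, P (f i) = P (g i) := fun i hi => measure_congr (hae i hi)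
  rw [hiInter, hind s hgmem]
  exact (Finset.prod_congr rfl hprod).symm


end aux

/-- Let `(ξ_n)_{n∈ℤ}` be i.i.d. random variables with values in
`ℕ = {1,2,…}`, with `E[ξ_0] < ∞` and `P(ξ_0 = 1) > 0`.  Define
`ℛ := {k ∈ ℤ : ξ_{k+i} ≤ i+1 for all i ≥ 0}`.  Then the law of `ℛ` is invariant under
integer translations, and almost surely both `ℛ ∩ [0,∞)` and `ℛ ∩ (−∞,0]` are infinite. -/
theorem stmt7 (Ω : Type) (mΩ : MeasurableSpace Ω) (P : Measure Ω)
    (hP : IsProbabilityMeasure P)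
    (ξ : ℤ → Ω → ℕ) (hpos : ∀ n ω, 1 ≤ ξ n ω)
    (hind : iIndepFun ξ P)
    (hident : ∀ n : ℤ, P.map (ξ n) = P.map (ξ 0))
    (hmean : Integrable (fun ω => (ξ 0 ω : ℝ)) P)
    (h1 : 0 < P {ω | ξ 0 ω = 1}) :
    (∀ m : ℤ,
      P.map (fun ω => fun k : ℤ => ∀ i : ℕ, ξ (k + m + i) ω ≤ i + 1)
        = P.map (fun ω => fun k : ℤ => ∀ i : ℕ, ξ (k + i) ω ≤ i + 1)) ∧
    (∀ᵐ ω ∂P,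
      {k : ℤ | 0 ≤ k ∧ ∀ i : ℕ, ξ (k + i) ω ≤ i + 1}.Infinite ∧
      {k : ℤ | k ≤ 0 ∧ ∀ i : ℕ, ξ (k + i) ω ≤ i + 1}.Infinite) := by
  classical
  -- step 1 : all the variables are a.e. measurable
  have hcast : MeasurableEmbedding (Nat.cast : ℕ → ℝ) :=
    ⟨Nat.cast_injective, measurable_of_countable _,
      fun s _ => (Set.Countable.image (Set.to_countable s) _).measurableSet⟩
  have hae0 : AEMeasurable (ξ 0) P := by
    have h := hmean.aemeasurable
    exact hcast.aemeasurable_comp_iff.1 h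
  have hprob0 : IsProbabilityMeasure (P.map (ξ 0)) := Measure.isProbabilityMeasure_map hae0
  have haen : ∀ n, AEMeasurable (ξ n) P := by
    intro n
    by_contra hcon
    have h := hident n
    rw [Measure.map_of_not_aemeasurable hcon] at h
    have h2 : (P.map (ξ 0)) Set.univ = 0 := by rw [← h]; rfl
    rw [measure_univ] at h2
    exact one_ne_zero h2
  -- step 2 : measurable modifications
  set ξ' : ℤ → Ω → ℕ := fun n ω => max 1 ((haen n).mk (ξ n) ω) with hξ'
  have hmeas' : ∀ n, Measurable (ξ' n) :=
    fun n => (measurable_of_countable (fun m => max 1 m)).comp (haen n).measurable_mk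
  have hae' : ∀ n, ξ n =ᵐ[P] ξ' n := by
    intro n
    filter_upwards [(haen n).ae_eq_mk] with ω hω
    rw [hξ']; dsimp only; rw [← hω]
    exact (max_eq_right (hpos n ω)).symm
  have hpos' : ∀ n ω, 1 ≤ ξ' n ω := fun n ω => le_max_left _ _
  have hident' : ∀ n, P.map (ξ' n) = P.map (ξ' 0) := by
    intro n
    rw [← Measure.map_congr (hae' n), ← Measure.map_congr (hae' 0), hident n]
  have hind' : iIndepFun ξ' P := iIndepFun_congr hind hae'
  have hfin' : ∫⁻ ω, (ξ' 0 ω : ℝ≥0∞) ∂P ≠ ⊤ := by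
    have h := hmean.lintegral_lt_top
    have heq : (fun ω => ENNReal.ofReal ((ξ 0 ω : ℕ) : ℝ)) = fun ω => ((ξ 0 ω : ℕ) : ℝ≥0∞) := by
      funext ω; exact ENNReal.ofReal_natCast _
    rw [heq] at h
    have hcongr : ∫⁻ ω, ((ξ 0 ω : ℕ) : ℝ≥0∞) ∂P = ∫⁻ ω, ((ξ' 0 ω : ℕ) : ℝ≥0∞) ∂P := by
      refine lintegral_congr_ae ?_
      filter_upwards [hae' 0] with ω hω
      rw [hω]
    rw [hcongr] at h
    exact h.ne
  have h1' : 0 < P (ξ' 0 ⁻¹' {1}) := by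
    have hseq : {ω | ξ 0 ω = 1} =ᵐ[P] (ξ' 0 ⁻¹' {1} : Set Ω) := by
      filter_upwards [hae' 0] with ω hω
      show (ξ 0 ω = 1) = (ξ' 0 ω ∈ ({1} : Set ℕ))
      simp only [Set.mem_singleton_iff, hω]
    rwa [measure_congr hseq] at h1
  have hae_all : ∀ᵐ ω ∂P, ∀ n : ℤ, ξ n ω = ξ' n ω := ae_all_iff.2 fun n => hae' n
  constructor
  · -- part 1
    intro m
    have h := part1_law hmeas' hind' hident' m
    have c1 : (fun ω => fun k : ℤ => ∀ i : ℕ, ξ (k + m + i) ω ≤ i + 1)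
        =ᵐ[P] (fun ω => fun k : ℤ => ∀ i : ℕ, ξ' (k + m + i) ω ≤ i + 1) := by
      filter_upwards [hae_all] with ω hω
      funext k
      exact propext (forall_congr' fun i => by rw [hω])
    have c2 : (fun ω => fun k : ℤ => ∀ i : ℕ, ξ (k + i) ω ≤ i + 1)
        =ᵐ[P] (fun ω => fun k : ℤ => ∀ i : ℕ, ξ' (k + i) ω ≤ i + 1) := by
      filter_upwards [hae_all] with ω hω
      funext k
      exact propext (forall_congr' fun i => by rw [hω])
    rw [Measure.map_congr c1, Measure.map_congr c2]
    exact h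
  · -- part 2
    have hright := right_infinite hmeas' hind' hident' hfin' h1'
    set T : Set Ω := ⋂ n : ℕ, ⋃ k : ℕ, ⋃ (_ : n ≤ k),
      {ω | ∀ i : ℕ, ξ' ((k : ℤ) + i) ω ≤ i + 1} with hT
    have hTmeas : MeasurableSet T := by
      refine MeasurableSet.iInter fun n => MeasurableSet.iUnion fun k =>
        MeasurableSet.iUnion fun _ => ?_
      have : {ω | ∀ i : ℕ, ξ' ((k:ℤ) + i) ω ≤ i + 1}
          = ⋂ i : ℕ, ξ' ((k:ℤ) + i) ⁻¹' Set.Iic (i + 1) := by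
        ext ω; simp [Set.mem_iInter, Set.mem_Iic]
      rw [this]
      exact MeasurableSet.iInter fun i => hmeas' _ measurableSet_Iic
    have hTae : ∀ᵐ ω ∂P, ω ∈ T := by
      have hc : P Tᶜ = 0 := by
        rw [measure_compl hTmeas (lt_of_le_of_lt prob_le_one (by norm_num)).ne, hright]
        simp
      have := measure_eq_zero_iff_ae_notMem.1 hc
      filter_upwards [this] with ω hω
      simpa using hω
    have hMae : ∀ᵐ ω ∂P, ∀ k : ℤ, ¬((∀ i : ℕ, ξ' (k + i) ω ≤ i + 1)
        ∧ ∀ j < k, ¬(∀ i : ℕ, ξ' (j + i) ω ≤ i + 1)) := by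
      refine ae_all_iff.2 fun k => ?_
      have := measure_eq_zero_iff_ae_notMem.1 (min_prob_zero hmeas' hind' hident' k)
      filter_upwards [this] with ω hω
      exact hω
    filter_upwards [hTae, hMae, hae_all] with ω hTω hMω hωeq
    have hrepl : ∀ k : ℤ, (∀ i : ℕ, ξ (k + i) ω ≤ i + 1) ↔ (∀ i : ℕ, ξ' (k + i) ω ≤ i + 1) :=
      fun k => forall_congr' fun i => by rw [hωeq]
    have hTω' : ∀ n : ℕ, ∃ k : ℕ, n ≤ k ∧ ∀ i : ℕ, ξ' ((k:ℤ) + i) ω ≤ i + 1 := by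
      intro n
      have := hTω
      rw [hT] at this
      simp only [Set.mem_iInter, Set.mem_iUnion, Set.mem_setOf_eq] at this
      obtain ⟨k, hk, hA⟩ := this n
      exact ⟨k, hk, hA⟩
    have hnomin : ∀ k : ℤ, (∀ i : ℕ, ξ' (k + i) ω ≤ i + 1) →
        ∃ j < k, (∀ i : ℕ, ξ' (j + i) ω ≤ i + 1) := by
      intro k hk
      by_contra hcon
      push_neg at hcon
      refine hMω k ⟨hk, fun j hj hall => ?_⟩
      obtain ⟨i, hi⟩ := hcon j hj
      exact absurd (hall i) (by omega)
    constructor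
    · refine Set.infinite_of_forall_exists_gt fun a => ?_
      obtain ⟨k, hk, hA⟩ := hTω' ((max a 0).toNat + 1)
      have hcast : ((max a 0).toNat : ℤ) = max a 0 := Int.toNat_of_nonneg (le_max_right a 0)
      have hik : ((max a 0).toNat + 1 : ℕ) ≤ k := hk
      have hk' : ((max a 0).toNat + 1 : ℤ) ≤ (k : ℤ) := by exact_mod_cast hik
      refine ⟨(k : ℤ), ⟨?_, (hrepl _).2 hA⟩, ?_⟩
      · omega
      · omega
    · obtain ⟨k₀n, _, hA₀⟩ := hTω' 0
      set k₀ : ℤ := (k₀n : ℤ) with hk₀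
      have hdesc : ∀ n : ℕ, ∃ k : ℤ, k ≤ k₀ - n ∧ ∀ i : ℕ, ξ' (k + i) ω ≤ i + 1 := by
        intro n
        induction n with
        | zero => exact ⟨k₀, by simp, hA₀⟩
        | succ n ih =>
          obtain ⟨k, hk, hA⟩ := ih
          obtain ⟨j, hj, hAj⟩ := hnomin k hA
          exact ⟨j, by push_cast; omega, hAj⟩
      refine Set.infinite_of_forall_exists_lt fun a => ?_
      set n : ℕ := (max (k₀ - a + 1) k₀).toNat with hn
      have hn1 : k₀ - a + 1 ≤ (n : ℤ) := le_trans (le_max_left _ _) (Int.self_le_toNat _)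
      have hn2 : k₀ ≤ (n : ℤ) := le_trans (le_max_right _ _) (Int.self_le_toNat _)
      obtain ⟨k, hk, hA⟩ := hdesc n
      refine ⟨k, ⟨by omega, (hrepl k).2 hA⟩, by omega⟩
end

section
/- Every word α ∈ 𝒢_min satisfies |α| ≤ H(α) + 1. -/
open MeasureTheory ProbabilityTheory Filter

/-- Action of a finite word `w = [α_ℓ, …, α_1]` (written right to left, so the head of the
list is the *last* letter applied) on a configuration: `αX = Φ_{α_ℓ} ∘ ⋯ ∘ Φ_{α_1} X`. -/
noncomputable def listAct (w : List ℕ) (X : Cfg) : Cfg :=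
  w.foldr (fun a Y => ibmStep ((a : ℕ∞)) Y) X

/-- A selection word: a nonempty list of positive integers. -/
def IsWord (w : List ℕ) : Prop := w ≠ [] ∧ ∀ a ∈ w, 1 ≤ a

/-- The length `|α|` of the word `w = [α_ℓ, …, α_1]` is `ℓ = w.length`. -/
def wordLen (w : List ℕ) : ℕ := w.length

/-- The height `H(α) = Σ_{i=1}^{ℓ} (α_i − 1)` of a word. -/
def height (w : List ℕ) : ℕ := (w.map fun a => a - 1).sum

/-- A word `α = α_ℓ ⋯ α_1` is good if applying its last letter `α_ℓ` always advances the
front: `F(α_ℓ ⋯ α_1 X) = F(α_{ℓ−1} ⋯ α_1 X) + 1` for every configuration `X`. -/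
def GoodWord (w : List ℕ) : Prop :=
  w ≠ [] ∧ ∀ X : Cfg, IsConfig X → front (listAct w X) = front (listAct w.tail X) + 1

/-- A word `α = α_ℓ ⋯ α_1` is triangular if `α_i ≤ i` for all `1 ≤ i ≤ ℓ`.  Here
`w.reverse = [α_1, …, α_ℓ]`, so the condition reads `α_{i+1} ≤ i + 1` for `i < ℓ`. -/
def TriWord (w : List ℕ) : Prop :=
  w ≠ [] ∧ ∀ i < w.length, w.reverse.getD i 0 ≤ i + 1

/-- `𝒢_min`: good selection words none of whose strict suffixes `α_ℓ ⋯ α_i` (`2 ≤ i ≤ ℓ`),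
i.e. none of whose nonempty proper list prefixes, is good. -/
def GoodMin (w : List ℕ) : Prop :=
  IsWord w ∧ GoodWord w ∧ ∀ k, 1 ≤ k → k < w.length → ¬ GoodWord (w.take k)

/-- `𝒯_min ∩ 𝒢`: triangular words none of whose strict suffixes is triangular,
which moreover are good. -/
def TriMinGood (w : List ℕ) : Prop :=
  IsWord w ∧ TriWord w ∧ (∀ k, 1 ≤ k → k < w.length → ¬ TriWord (w.take k)) ∧ GoodWord w

section Helpers

lemma sup_aux (F : ℤ → ℕ∞) (p : ℤ) (c : ℕ∞) :
    (⨆ s : Finset ℤ, ((∑ j ∈ s, F j) + if p ∈ s then c else 0))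
      = (⨆ s : Finset ℤ, ∑ j ∈ s, F j) + c := by
  apply le_antisymm
  · refine iSup_le fun s => add_le_add (le_iSup (fun s : Finset ℤ => ∑ j ∈ s, F j) s) ?_
    split <;> simp
  · rw [ENat.iSup_add]
    refine iSup_le fun s => ?_
    calc (∑ j ∈ s, F j) + c
        ≤ (∑ j ∈ insert p s, F j) + (if p ∈ insert p s then c else 0) := by
          rw [if_pos (Finset.mem_insert_self p s)]
          exact add_le_add_left (Finset.sum_le_sum_of_subset (Finset.subset_insert p s)) c
      _ ≤ _ := le_iSup (fun s : Finset ℤ => (∑ j ∈ s, F j) + if p ∈ s then c else 0) (insert p s)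

lemma tailSum_mono (X : Cfg) {k k' : ℤ} (h : k ≤ k') : tailSum X k' ≤ tailSum X k := by
  refine iSup_mono fun s => Finset.sum_le_sum fun j _ => ?_
  by_cases hj : k' < j
  · rw [if_pos hj, if_pos (lt_of_le_of_lt h hj)]
  · rw [if_neg hj]; exact zero_le

lemma tailSum_eq_zero (X : Cfg) (k : ℤ) (h : ∀ j, k < j → X j = 0) : tailSum X k = 0 := by
  have h0 : tailSum X k ≤ 0 := by
    refine iSup_le fun s => le_of_eq (Finset.sum_eq_zero fun j _ => ?_)
    by_cases hj : k < j
    · rw [if_pos hj, h j hj]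
    · rw [if_neg hj]
  exact le_antisymm h0 zero_le

lemma tailSum_pred (X : Cfg) (k : ℤ) : tailSum X (k - 1) = X k + tailSum X k := by
  have key : ∀ s : Finset ℤ, (∑ j ∈ s, if k - 1 < j then X j else 0)
      = (∑ j ∈ s, if k < j then X j else 0) + (if k ∈ s then X k else 0) := by
    intro s
    rw [← Finset.sum_ite_eq' s k X, ← Finset.sum_add_distrib]
    refine Finset.sum_congr rfl fun j _ => ?_
    by_cases h1 : j = k
    · rw [if_pos (show k - 1 < j by omega), if_neg (show ¬ k < j by omega), if_pos h1, zero_add,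
        h1]
    · rw [if_neg h1, add_zero]
      by_cases h2 : k < j
      · rw [if_pos h2, if_pos (show k - 1 < j by omega)]
      · rw [if_neg h2, if_neg (show ¬ k - 1 < j by omega)]
  have h2 : tailSum X (k - 1)
      = ⨆ s : Finset ℤ, ((∑ j ∈ s, if k < j then X j else 0) + if k ∈ s then X k else 0) := by
    unfold tailSum
    exact iSup_congr key
  rw [h2, sup_aux _ k (X k), add_comm]
  rfl

lemma tailSum_addBall (X : Cfg) (p k : ℤ) :
    tailSum (fun m => X m + if m = p then 1 else 0) k
      = tailSum X k + (if k < p then 1 else 0) := by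
  have key : ∀ s : Finset ℤ, (∑ j ∈ s, if k < j then (X j + if j = p then 1 else 0) else 0)
      = (∑ j ∈ s, if k < j then X j else 0) + (if p ∈ s then (if k < p then 1 else 0) else 0) := by
    intro s
    rw [← Finset.sum_ite_eq' s p (fun _ => if k < p then (1:ℕ∞) else 0), ← Finset.sum_add_distrib]
    refine Finset.sum_congr rfl fun j _ => ?_
    by_cases h1 : j = p <;> by_cases h2 : k < j
    · simp [h1, h2, show k < p by omega]
    · simp [h1, h2, show ¬ k < p by omega]
    · simp [h1, h2]
    · simp [h1, h2]
  have h2 : tailSum (fun m => X m + if m = p then 1 else 0) k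
      = ⨆ s : Finset ℤ, ((∑ j ∈ s, if k < j then X j else 0)
          + if p ∈ s then (if k < p then 1 else 0) else 0) := by
    unfold tailSum
    exact iSup_congr key
  rw [h2, sup_aux _ p _]
  rfl



end Helpers
section StepLemmas

lemma front_eq {X : Cfg} {f : ℤ} (h : ∀ k, X k = 0 ↔ f < k) : front X = f := by
  have hs : {k : ℤ | X k ≠ 0} = Set.Iic f := by
    ext k
    simp only [Set.mem_setOf_eq, ne_eq, h k, Set.mem_Iic, not_lt]
  rw [front, hs, csSup_Iic]

lemma cfg_one_le {X : Cfg} {f : ℤ} (h : ∀ k, X k = 0 ↔ f < k) {k : ℤ} (hk : k ≤ f) :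
    1 ≤ X k := by
  rw [ENat.one_le_iff_ne_zero]
  intro h0
  have := (h k).1 h0
  omega

lemma tailSum_front_zero {X : Cfg} {f : ℤ} (h : ∀ k, X k = 0 ↔ f < k) {k : ℤ} (hk : f ≤ k) :
    tailSum X k = 0 :=
  tailSum_eq_zero X k fun j hj => (h j).2 (by omega)

lemma tailSum_lower {X : Cfg} {f : ℤ} (h : ∀ k, X k = 0 ↔ f < k) (n : ℕ) :
    (n : ℕ∞) ≤ tailSum X (f - n) := by
  induction n with
  | zero => simp
  | succ m ih =>
    have he : f - ((m : ℕ) + 1 : ℕ) = (f - m) - 1 := by push_cast; ring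
    rw [he, tailSum_pred]
    have h1 : 1 ≤ X (f - m) := cfg_one_le h (by omega)
    calc ((m + 1 : ℕ) : ℕ∞) = 1 + (m : ℕ∞) := by push_cast; ring
      _ ≤ X (f - m) + tailSum X (f - m) := add_le_add h1 ih

lemma binOf_spec {X : Cfg} {f : ℤ} (h : ∀ k, X k = 0 ↔ f < k) {n : ℕ} (hn : 1 ≤ n) :
    binOf X (n : ℕ∞) ≤ f ∧ (∀ k, tailSum X k < (n : ℕ∞) ↔ binOf X (n : ℕ∞) ≤ k) := by
  set S : Set ℤ := {k : ℤ | tailSum X k < (n : ℕ∞)} with hS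
  have hfS : f ∈ S := by
    simp only [hS, Set.mem_setOf_eq, tailSum_front_zero h (le_refl f)]
    exact_mod_cast Nat.pos_of_ne_zero (by omega)
  have hbdd : BddBelow S := by
    refine ⟨f - n, fun k hk => ?_⟩
    by_contra hc
    push_neg at hc
    have h1 : tailSum X (f - n) ≤ tailSum X k := tailSum_mono X (by omega)
    have h2 : (n : ℕ∞) ≤ tailSum X k := le_trans (tailSum_lower h n) h1
    exact absurd hk (by simp only [hS, Set.mem_setOf_eq, not_lt]; exact h2)
  have hmem : binOf X (n : ℕ∞) ∈ S := Int.csInf_mem ⟨f, hfS⟩ hbdd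
  refine ⟨csInf_le hbdd hfS, fun k => ⟨fun hk => csInf_le hbdd hk, fun hk => ?_⟩⟩
  exact lt_of_le_of_lt (tailSum_mono X hk) hmem

lemma ibmStep_coe (X : Cfg) {n : ℕ} (hn : 1 ≤ n) :
    ibmStep (n : ℕ∞) X = fun k => X k + if k = binOf X (n : ℕ∞) + 1 then 1 else 0 := by
  unfold ibmStep
  rw [if_neg (by exact_mod_cast (by omega : n ≠ 0)), if_neg (ENat.coe_ne_top n)]

lemma step_char {X : Cfg} {f : ℤ} (h : ∀ k, X k = 0 ↔ f < k) {n : ℕ} (hn : 1 ≤ n) :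
    ∀ k, ibmStep (n : ℕ∞) X k = 0 ↔ max f (binOf X (n : ℕ∞) + 1) < k := by
  obtain ⟨hBf, -⟩ := binOf_spec h hn
  intro k
  rw [ibmStep_coe X hn]
  by_cases hk : k = binOf X (n : ℕ∞) + 1
  · simp only [hk, if_pos rfl]
    constructor
    · intro h0
      exact absurd h0 (by simp)
    · intro h0
      omega
  · simp only [if_neg hk, add_zero, h k]
    omega

lemma adv_iff {X : Cfg} {f : ℤ} (h : ∀ k, X k = 0 ↔ f < k) {n : ℕ} (hn : 1 ≤ n) :
    front (ibmStep (n : ℕ∞) X) = f + 1 ↔ (n : ℕ∞) ≤ X f := by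
  obtain ⟨hBf, hiff⟩ := binOf_spec h hn
  rw [front_eq (step_char h hn)]
  have htf : tailSum X f = 0 := tailSum_front_zero h (le_refl f)
  have hpred : tailSum X (f - 1) = X f + tailSum X f := tailSum_pred X f
  rw [htf, add_zero] at hpred
  constructor
  · intro hfr
    have hB : binOf X (n : ℕ∞) = f := by omega
    have hlt : ¬ tailSum X (f - 1) < (n : ℕ∞) := by
      rw [hiff, hB]; omega
    rw [not_lt, hpred] at hlt
    exact hlt
  · intro hX
    have hlt : ¬ tailSum X (f - 1) < (n : ℕ∞) := by
      rw [hpred]; exact not_lt.mpr hX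
    have hB : f ≤ binOf X (n : ℕ∞) := by
      by_contra hc
      push_neg at hc
      exact hlt ((hiff _).mpr (by omega))
    omega

lemma listAct_nil (X : Cfg) : listAct [] X = X := rfl

lemma listAct_cons (a : ℕ) (t : List ℕ) (X : Cfg) :
    listAct (a :: t) X = ibmStep (a : ℕ∞) (listAct t X) := rfl

lemma listAct_append (u v : List ℕ) (X : Cfg) :
    listAct (u ++ v) X = listAct u (listAct v X) := by
  induction u with
  | nil => rfl
  | cons a t ih => rw [List.cons_append, listAct_cons, ih, listAct_cons]

lemma listAct_isConfig (u : List ℕ) (hu : ∀ a ∈ u, 1 ≤ a) {X : Cfg} (hX : IsConfig X) :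
    IsConfig (listAct u X) := by
  induction u with
  | nil => exact hX
  | cons a t ih =>
    have ht : IsConfig (listAct t X) := ih (fun x hx => hu x (List.mem_cons_of_mem a hx))
    obtain ⟨F, hF⟩ := ht
    rw [listAct_cons]
    exact ⟨_, step_char hF (hu a (List.mem_cons_self))⟩

end StepLemmas
section MainInduction

lemma main_tri (u : List ℕ) :
    (∀ a ∈ u, 1 ≤ a) → (∀ j : ℕ, u.getD j 0 ≤ u.length - j) →
    ∀ (X : Cfg) (f : ℤ), (∀ k, X k = 0 ↔ f < k) →
    ∀ (X' : Cfg) (f' : ℤ), (∀ k, X' k = 0 ↔ f' < k) →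
    ∃ g : ℤ, 0 ≤ g ∧
      (∀ k, listAct u X k = 0 ↔ f + g < k) ∧
      (∀ k, listAct u X' k = 0 ↔ f' + g < k) ∧
      (∀ j : ℤ, 1 ≤ j → listAct u X (f + j) = listAct u X' (f' + j)) ∧
      (∀ j : ℤ, 0 ≤ j → tailSum (listAct u X) (f + j) = tailSum (listAct u X') (f' + j)) ∧
      tailSum (listAct u X) f = u.length := by
  induction u with
  | nil =>
    intro _ _ X f hX X' f' hX'
    refine ⟨0, le_refl 0, ?_, ?_, ?_, ?_, ?_⟩
    · intro k; rw [add_zero]; exact hX k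
    · intro k; rw [add_zero]; exact hX' k
    · intro j hj
      rw [listAct_nil, listAct_nil, (hX _).2 (by omega), (hX' _).2 (by omega)]
    · intro j hj
      rw [listAct_nil, listAct_nil, tailSum_front_zero hX (by omega),
        tailSum_front_zero hX' (by omega)]
    · rw [listAct_nil, tailSum_front_zero hX (le_refl f)]
      simp
  | cons a v ih =>
    intro hpos htri X f hX X' f' hX'
    have ha : 1 ≤ a := hpos a (List.mem_cons_self)
    have hvpos : ∀ x ∈ v, 1 ≤ x := fun x hx => hpos x (List.mem_cons_of_mem a hx)
    have hvtri : ∀ j : ℕ, v.getD j 0 ≤ v.length - j := by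
      intro j
      have h1 := htri (j + 1)
      simp only [List.getD_cons_succ, List.length_cons] at h1
      omega
    have halen : a ≤ v.length + 1 := by
      have h1 := htri 0
      simp only [List.getD_cons_zero, List.length_cons] at h1
      omega
    obtain ⟨g, hg0, hYc, hY'c, hbin, htl, hlen⟩ := ih hvpos hvtri X f hX X' f' hX'
    set Y := listAct v X with hYdef
    set Y' := listAct v X' with hY'def
    have hlen' : tailSum Y' f' = (v.length : ℕ∞) := by
      have h0 := htl 0 (le_refl 0)
      rw [add_zero, add_zero] at h0
      rw [← h0, hlen]
    obtain ⟨hBf, hiff⟩ := binOf_spec hYc ha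
    obtain ⟨hBf', hiff'⟩ := binOf_spec hY'c ha
    set B := binOf Y (a : ℕ∞) with hBdef
    set B' := binOf Y' (a : ℕ∞) with hB'def
    have hcast : (a : ℕ∞) ≤ 1 + (v.length : ℕ∞) := by
      have : ((a : ℕ) : ℕ∞) ≤ ((v.length + 1 : ℕ) : ℕ∞) := by exact_mod_cast halen
      calc (a : ℕ∞) ≤ ((v.length + 1 : ℕ) : ℕ∞) := this
        _ = 1 + (v.length : ℕ∞) := by push_cast; ring
    have hfB : f ≤ B := by
      have hYf : 1 ≤ Y f := cfg_one_le hYc (by omega)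
      have hts2 : (a : ℕ∞) ≤ tailSum Y (f - 1) := by
        rw [tailSum_pred Y f, hlen]
        exact le_trans hcast (add_le_add_left hYf _)
      by_contra hc
      push_neg at hc
      exact absurd ((hiff (f - 1)).mpr (by omega)) (not_lt.mpr hts2)
    have hfB' : f' ≤ B' := by
      have hYf : 1 ≤ Y' f' := cfg_one_le hY'c (by omega)
      have hts2 : (a : ℕ∞) ≤ tailSum Y' (f' - 1) := by
        rw [tailSum_pred Y' f', hlen']
        exact le_trans hcast (add_le_add_left hYf _)
      by_contra hc
      push_neg at hc
      exact absurd ((hiff' (f' - 1)).mpr (by omega)) (not_lt.mpr hts2)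
    have hd : B - f = B' - f' := by
      have e1 : B' ≤ f' + (B - f) := by
        have ht1 : tailSum Y' (f' + (B - f)) = tailSum Y (f + (B - f)) :=
          (htl (B - f) (by omega)).symm
        have ht2 : tailSum Y (f + (B - f)) < (a : ℕ∞) := by
          rw [show f + (B - f) = B by ring]
          exact (hiff B).mpr (le_refl B)
        exact (hiff' _).mp (by rw [ht1]; exact ht2)
      have e2 : B ≤ f + (B' - f') := by
        have ht1 : tailSum Y (f + (B' - f')) = tailSum Y' (f' + (B' - f')) :=
          htl (B' - f') (by omega)
        have ht2 : tailSum Y' (f' + (B' - f')) < (a : ℕ∞) := by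
          rw [show f' + (B' - f') = B' by ring]
          exact (hiff' B').mpr (le_refl B')
        exact (hiff _).mp (by rw [ht1]; exact ht2)
      omega
    refine ⟨max g (B - f + 1), by omega, ?_, ?_, ?_, ?_, ?_⟩
    · intro k
      rw [listAct_cons, step_char hYc ha k]
      omega
    · intro k
      rw [listAct_cons, step_char hY'c ha k]
      omega
    · intro j hj
      rw [listAct_cons, listAct_cons, ← hYdef, ← hY'def]
      simp only [ibmStep_coe Y ha, ibmStep_coe Y' ha]
      rw [hbin j hj, if_congr (show f + j = B + 1 ↔ f' + j = B' + 1 by omega) rfl rfl]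
    · intro j hj
      rw [listAct_cons, listAct_cons, ← hYdef, ← hY'def]
      simp only [ibmStep_coe Y ha, ibmStep_coe Y' ha]
      rw [tailSum_addBall, tailSum_addBall, htl j hj,
        if_congr (show f + j < B + 1 ↔ f' + j < B' + 1 by omega) rfl rfl]
    · rw [listAct_cons, ← hYdef]
      simp only [ibmStep_coe Y ha]
      rw [tailSum_addBall, hlen, if_pos (show f < B + 1 by omega)]
      simp only [List.length_cons]
      push_cast
      ring

end MainInduction
section Goodness

lemma good_count {a : ℕ} {t : List ℕ} (hw : GoodWord (a :: t)) (hpos : ∀ x ∈ a :: t, 1 ≤ x) :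
    ∀ Z : Cfg, IsConfig Z →
      (a : ℕ∞) ≤ (listAct t Z) (front (listAct t Z)) := by
  intro Z hZ
  obtain ⟨-, hgood⟩ := hw
  have hZt : IsConfig (listAct t Z) :=
    listAct_isConfig t (fun x hx => hpos x (List.mem_cons_of_mem a hx)) hZ
  obtain ⟨F, hF⟩ := hZt
  have ha : 1 ≤ a := hpos a (List.mem_cons_self)
  have hg := hgood Z hZ
  rw [show (a :: t).tail = t from rfl, listAct_cons, front_eq hF] at hg
  have := (adv_iff hF ha).mp hg
  rwa [front_eq hF]

lemma good_of_count {a : ℕ} (ha : 1 ≤ a) {u : List ℕ} (hupos : ∀ x ∈ u, 1 ≤ x)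
    (h : ∀ Z : Cfg, IsConfig Z → (a : ℕ∞) ≤ (listAct u Z) (front (listAct u Z))) :
    GoodWord (a :: u) := by
  refine ⟨List.cons_ne_nil a u, fun X hX => ?_⟩
  obtain ⟨F, hF⟩ := listAct_isConfig u hupos hX
  rw [show (a :: u).tail = u from rfl, listAct_cons, front_eq hF]
  refine (adv_iff hF ha).mpr ?_
  have := h X hX
  rwa [front_eq hF] at this

lemma getD_rev (l : List ℕ) (j : ℕ) (hj : j < l.length) :
    l.getD j 0 = l.reverse.getD (l.length - 1 - j) 0 := by
  rw [List.getD_eq_getElem l 0 hj,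
    List.getD_eq_getElem l.reverse 0 (by rw [List.length_reverse]; omega)]
  rw [List.getElem_reverse]
  congr 1
  omega

lemma takeGood {w : List ℕ} (hg : GoodWord w) (hpos : ∀ x ∈ w, 1 ≤ x) {k : ℕ} (hk1 : 1 ≤ k)
    (hkl : k < w.length) (htri : TriWord (w.take k)) : GoodWord (w.take k) := by
  obtain ⟨a, t, rfl⟩ : ∃ a t, w = a :: t := by
    cases w with
    | nil => simp at hkl
    | cons a t => exact ⟨a, t, rfl⟩
  have ha : 1 ≤ a := hpos a (List.mem_cons_self)
  obtain ⟨m, rfl⟩ : ∃ m, k = m + 1 := ⟨k - 1, by omega⟩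
  rw [List.take_succ_cons] at htri ⊢
  set u := t.take m with hu
  have hulen : u.length = m := by
    rw [hu, List.length_take]
    simp only [List.length_cons] at hkl
    omega
  have hupos : ∀ x ∈ u, 1 ≤ x := fun x hx =>
    hpos x (List.mem_cons_of_mem a (List.take_subset m t hx))
  -- translate triangularity
  obtain ⟨-, htri2⟩ := htri
  have hlen2 : (a :: u).length = m + 1 := by simp [hulen]
  have hrev : (a :: u).reverse = u.reverse ++ [a] := by simp
  have hutri : ∀ j : ℕ, u.getD j 0 ≤ u.length - j := by
    intro j
    by_cases hj : j < u.length
    · have h1 : u.getD j 0 = u.reverse.getD (u.length - 1 - j) 0 := getD_rev u j hj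
      have h2 : u.reverse.getD (u.length - 1 - j) 0
          = (a :: u).reverse.getD (u.length - 1 - j) 0 := by
        rw [hrev, List.getD_append]
        rw [List.length_reverse]
        omega
      have h3 := htri2 (u.length - 1 - j) (by rw [hlen2]; omega)
      rw [h1, h2]
      omega
    · rw [List.getD_eq_default u 0 (by omega)]
      exact Nat.zero_le _
  -- case m = 0 : u = []
  rcases Nat.eq_zero_or_pos m with hm | hm
  · subst hm
    have hu0 : u = [] := List.length_eq_zero_iff.mp hulen
    rw [hu0]
    have ha1 : a = 1 := by
      have := htri2 0 (by rw [hlen2]; omega)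
      rw [hrev, hu0] at this
      simp at this
      omega
    subst ha1
    refine good_of_count (le_refl 1) (by simp) ?_
    intro Z hZ
    obtain ⟨F, hF⟩ := hZ
    rw [listAct_nil, front_eq hF]
    exact_mod_cast cfg_one_le hF (le_refl F)
  -- main case
  have hune : u ≠ [] := by
    intro h0
    rw [h0] at hulen
    simp at hulen
    omega
  -- the constant count
  have hcc : ∀ Z Z' : Cfg, IsConfig Z → IsConfig Z' →
      (listAct u Z) (front (listAct u Z)) = (listAct u Z') (front (listAct u Z')) := by
    intro Z Z' hZ hZ'
    obtain ⟨e, he⟩ := hZ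
    obtain ⟨e', he'⟩ := hZ'
    obtain ⟨g, hg0, hc, hc', hbin, htl, hlenu⟩ := main_tri u hupos hutri Z e he Z' e' he'
    have hfr : front (listAct u Z) = e + g := front_eq hc
    have hfr' : front (listAct u Z') = e' + g := front_eq hc'
    have hg1 : 1 ≤ g := by
      by_contra hcg
      push_neg at hcg
      have hgz : g = 0 := by omega
      have : tailSum (listAct u Z) e = 0 :=
        tailSum_front_zero hc (by omega)
      rw [hlenu] at this
      have : u.length = 0 := by exact_mod_cast this
      exact hune (List.length_eq_zero_iff.mp this)
    rw [hfr, hfr']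
    exact hbin g hg1
  -- the fixed count is at least a
  have hX0 : ∀ k : ℤ, (fun k : ℤ => if k ≤ 0 then (1 : ℕ∞) else 0) k = 0 ↔ (0 : ℤ) < k := by
    intro k
    by_cases hk : k ≤ 0 <;> simp [hk] <;> omega
  set X0 : Cfg := fun k : ℤ => if k ≤ 0 then (1 : ℕ∞) else 0 with hX0def
  have hX0c : IsConfig X0 := ⟨0, hX0⟩
  have hcount := good_count hg hpos
  have hrw : t = u ++ t.drop m := by rw [hu, List.take_append_drop]
  have hbig : (a : ℕ∞) ≤ (listAct u X0) (front (listAct u X0)) := by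
    have h1 := hcount X0 hX0c
    rw [hrw, listAct_append] at h1
    have hrZ : IsConfig (listAct (t.drop m) X0) :=
      listAct_isConfig _ (fun x hx =>
        hpos x (List.mem_cons_of_mem a (List.drop_subset m t hx))) hX0c
    rw [hcc _ X0 hrZ hX0c] at h1
    exact h1
  refine good_of_count ha hupos ?_
  intro Z hZ
  rw [hcc Z X0 hZ hX0c]
  exact hbig

end Goodness
section Counting

lemma height_eq (w : List ℕ) :
    height w = ∑ j ∈ Finset.range w.length, (w.getD j 0 - 1) := by
  induction w with
  | nil => simp [height]
  | cons a t ih =>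
    show (a - 1) + height t = _
    simp only [List.length_cons]
    rw [Finset.sum_range_succ']
    simp only [List.getD_cons_succ, List.getD_cons_zero]
    rw [← ih, Nat.add_comm]

end Counting
/-- Every word `α ∈ 𝒢_min` satisfies `|α| ≤ H(α) + 1`. -/
theorem stmt11 (w : List ℕ) (hw : GoodMin w) : wordLen w ≤ height w + 1 := by
  classical
  obtain ⟨⟨hne, hpos⟩, hgood, hmin⟩ := hw
  have hl1 : 1 ≤ w.length := List.length_pos_iff.mpr hne
  have hwit : ∀ k, k ∈ Finset.Ico 1 w.length → ∃ j, j < k ∧ k - j + 1 ≤ w.getD j 0 := by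
    intro k hk
    rw [Finset.mem_Ico] at hk
    have hnottri : ¬ TriWord (w.take k) := fun ht =>
      hmin k hk.1 hk.2 (takeGood hgood hpos hk.1 hk.2 ht)
    rw [TriWord] at hnottri
    push_neg at hnottri
    have htake_len : (w.take k).length = k := by rw [List.length_take]; omega
    have htake_ne : w.take k ≠ [] := by
      intro h0
      rw [h0] at htake_len
      simp at htake_len
      omega
    obtain ⟨i, hi, hbig⟩ := hnottri htake_ne
    rw [htake_len] at hi
    refine ⟨k - 1 - i, by omega, ?_⟩
    have h1 : (w.take k).getD (k - 1 - i) 0 = (w.take k).reverse.getD i 0 := by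
      have h0 := getD_rev (w.take k) (k - 1 - i) (by omega)
      rw [htake_len] at h0
      rw [h0]
      congr 1
      omega
    have h2 : (w.take k).getD (k - 1 - i) 0 = w.getD (k - 1 - i) 0 := by
      rw [List.getD_eq_getElem _ 0 (by rw [htake_len]; omega),
        List.getD_eq_getElem _ 0 (by omega : k - 1 - i < w.length)]
      exact List.getElem_take ..
    omega
  set P : ℕ → ℕ → Prop := fun k j => j < k ∧ k - j + 1 ≤ w.getD j 0 with hP
  set psi : ℕ → ℕ := fun k => if h : ∃ j, P k j then h.choose else 0 with hpsi
  have hpsiP : ∀ k ∈ Finset.Ico 1 w.length, P k (psi k) := by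
    intro k hk
    obtain ⟨j, hj⟩ := hwit k hk
    have hex : ∃ j, P k j := ⟨j, hj⟩
    rw [hpsi]
    simp only [dif_pos hex]
    exact hex.choose_spec
  have hmap : ∀ k ∈ Finset.Ico 1 w.length, psi k ∈ Finset.range w.length := by
    intro k hk
    have hp := hpsiP k hk
    rw [Finset.mem_range]
    rw [Finset.mem_Ico] at hk
    have := hp.1
    omega
  have hcard := Finset.card_eq_sum_card_fiberwise hmap
  have hfib : ∀ j ∈ Finset.range w.length,
      ((Finset.Ico 1 w.length).filter (fun k => psi k = j)).card ≤ w.getD j 0 - 1 := by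
    intro j hj
    have hsub : (Finset.Ico 1 w.length).filter (fun k => psi k = j)
        ⊆ Finset.Ico (j + 1) (j + w.getD j 0) := by
      intro k hk
      rw [Finset.mem_filter] at hk
      obtain ⟨hk1, hk2⟩ := hk
      have hp := hpsiP k hk1
      rw [hk2] at hp
      rw [Finset.mem_Ico]
      obtain ⟨hp1, hp2⟩ := hp
      omega
    calc ((Finset.Ico 1 w.length).filter (fun k => psi k = j)).card
        ≤ (Finset.Ico (j + 1) (j + w.getD j 0)).card := Finset.card_le_card hsub
      _ = w.getD j 0 - 1 := by rw [Nat.card_Ico]; omega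
  have hsum : w.length - 1 ≤ ∑ j ∈ Finset.range w.length, (w.getD j 0 - 1) := by
    have h0 : (Finset.Ico 1 w.length).card = w.length - 1 := by rw [Nat.card_Ico]
    rw [← h0, hcard]
    exact Finset.sum_le_sum hfib
  rw [← height_eq] at hsum
  rw [wordLen]
  omega
end
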